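/- arXiv:0902.2771 — 8 statements merged into one kernel-verified Lean document; each statement's English description precedes it below -/
import Mathlib

section
/- Let (A_k) be a sequence of p×q real matrices converging to a matrix A, (b_k) a sequence of vectors in ℝ^p converging to b, and C_k = {x ∈ ℝ^q : A_k x ≥ b_k} (componentwise). Assume there exists M ∈ ℝ such that ‖x‖ ≤ M for every k and every x ∈ C_k, and assume the limit set C = {x ∈ ℝ^q : A x ≥ b} is a singleton {x̄}. Let J' = {j ∈ {1,…,p} : (A x̄)_j = b_j} be the set of constraints binding at x̄. If there exists N such that for all k ≥ N there is x_k ∈ C_k with (A_k x_k)_j = (b_k)_j for every j ∈ J', then for all sufficiently large k, C_k is a singleton. -/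
open Filter

lemma aux_shrink (p q : ℕ) (A : ℕ → Fin p → Fin q → ℝ) (b : ℕ → Fin p → ℝ)
    (Alim : Fin p → Fin q → ℝ) (blim : Fin p → ℝ)
    (hA : Tendsto A atTop (nhds Alim)) (hb : Tendsto b atTop (nhds blim))
    (M : ℝ)
    (hM : ∀ k, ∀ x : Fin q → ℝ, (∀ j, b k j ≤ ∑ l, A k j l * x l) → ‖x‖ ≤ M)
    (xbar : Fin q → ℝ)
    (hC : {x : Fin q → ℝ | ∀ j, blim j ≤ ∑ l, Alim j l * x l} = {xbar})
    (ε : ℝ) (hε : 0 < ε) :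
    ∀ᶠ k in atTop, ∀ x : Fin q → ℝ, (∀ j, b k j ≤ ∑ l, A k j l * x l) → ‖x - xbar‖ < ε := by
  by_contra hcon
  rw [Filter.not_eventually] at hcon
  have hcon' : ∃ᶠ k in atTop, ∃ x : Fin q → ℝ,
      (∀ j, b k j ≤ ∑ l, A k j l * x l) ∧ ε ≤ ‖x - xbar‖ := by
    refine hcon.mono fun k hk => ?_
    push_neg at hk
    exact hk
  obtain ⟨φ, hφ, hφP⟩ := Filter.extraction_of_frequently_atTop hcon'
  choose x hx hxε using hφP
  have hxball : ∀ n, x n ∈ Metric.closedBall (0 : Fin q → ℝ) M := by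
    intro n
    simpa [Metric.mem_closedBall, dist_eq_norm] using hM (φ n) (x n) (hx n)
  obtain ⟨a, _, ψ, hψ, hlim⟩ := tendsto_subseq_of_bounded Metric.isBounded_closedBall hxball
  have hxl : ∀ l, Tendsto (fun m => x (ψ m) l) atTop (nhds (a l)) :=
    fun l => (tendsto_pi_nhds.mp hlim) l
  have hφψ : Tendsto (fun m => φ (ψ m)) atTop atTop :=
    (hφ.comp hψ).tendsto_atTop
  have hAent : ∀ j l, Tendsto (fun m => A (φ (ψ m)) j l) atTop (nhds (Alim j l)) := by
    intro j l
    exact ((tendsto_pi_nhds.mp ((tendsto_pi_nhds.mp hA) j) l).comp hφψ)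
  have hbent : ∀ j, Tendsto (fun m => b (φ (ψ m)) j) atTop (nhds (blim j)) :=
    fun j => ((tendsto_pi_nhds.mp hb) j).comp hφψ
  have haC : a ∈ {x : Fin q → ℝ | ∀ j, blim j ≤ ∑ l, Alim j l * x l} := by
    intro j
    have hsum : Tendsto (fun m => ∑ l, A (φ (ψ m)) j l * x (ψ m) l) atTop
        (nhds (∑ l, Alim j l * a l)) :=
      tendsto_finset_sum _ fun l _ => (hAent j l).mul (hxl l)
    exact le_of_tendsto_of_tendsto' (hbent j) hsum (fun m => hx (ψ m) j)
  rw [hC] at haC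
  have haxbar : a = xbar := haC
  have : ε ≤ ‖a - xbar‖ := by
    have hnorm : Tendsto (fun m => ‖x (ψ m) - xbar‖) atTop (nhds ‖a - xbar‖) :=
      ((hlim.sub tendsto_const_nhds).norm)
    exact le_of_tendsto_of_tendsto' tendsto_const_nhds hnorm (fun m => hxε (ψ m))
  rw [haxbar] at this
  simp at this
  linarith

/-- Let `A k → A∞` be `p × q` matrices, `b k → b∞` vectors in `ℝ^p`, and
`C k = {x | A k x ≥ b k}` componentwise. If the sets `C k` are uniformly bounded,
the limit set `C = {x | A∞ x ≥ b∞}` is the singleton `{xbar}`, and for all large `k`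
there is `x ∈ C k` satisfying with equality all the constraints that are binding at `xbar`,
then for all sufficiently large `k`, `C k` is a singleton. -/
theorem statement2 (p q : ℕ) (A : ℕ → Fin p → Fin q → ℝ) (b : ℕ → Fin p → ℝ)
    (Alim : Fin p → Fin q → ℝ) (blim : Fin p → ℝ)
    (hA : Tendsto A atTop (nhds Alim)) (hb : Tendsto b atTop (nhds blim))
    (M : ℝ)
    (hM : ∀ k, ∀ x : Fin q → ℝ, (∀ j, b k j ≤ ∑ l, A k j l * x l) → ‖x‖ ≤ M)
    (xbar : Fin q → ℝ)
    (hC : {x : Fin q → ℝ | ∀ j, blim j ≤ ∑ l, Alim j l * x l} = {xbar})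
    (N : ℕ)
    (hN : ∀ k, N ≤ k → ∃ x : Fin q → ℝ, (∀ j, b k j ≤ ∑ l, A k j l * x l) ∧
      ∀ j, (∑ l, Alim j l * xbar l) = blim j → (∑ l, A k j l * x l) = b k j) :
    ∃ N' : ℕ, ∀ k, N' ≤ k → ∃ x : Fin q → ℝ,
      {y : Fin q → ℝ | ∀ j, b k j ≤ ∑ l, A k j l * y l} = {x} := by
  -- M is nonnegative
  obtain ⟨x0, hx0, -⟩ := hN N le_rfl
  have hM0 : 0 ≤ M := le_trans (norm_nonneg x0) (hM N x0 hx0)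
  -- xbar is feasible for the limit problem
  have hxbarC : ∀ j, blim j ≤ ∑ l, Alim j l * xbar l := by
    have : xbar ∈ ({xbar} : Set (Fin q → ℝ)) := rfl
    rw [← hC] at this
    exact this
  -- bound on limit matrix entries
  obtain ⟨K, hK1, hKb⟩ : ∃ K : ℝ, 1 ≤ K ∧ ∀ j l, |Alim j l| ≤ K := by
    obtain ⟨K0, hK0⟩ := Finite.exists_le (fun jl : Fin p × Fin q => |Alim jl.1 jl.2|)
    refine ⟨max K0 0 + 1, by simp [le_max_right K0 0], fun j l => ?_⟩
    have h3 : |Alim j l| ≤ K0 := hK0 (j, l)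
    have h2 : K0 ≤ max K0 0 := le_max_left _ _
    linarith
  have hKpos : (0:ℝ) < K := lt_of_lt_of_le one_pos hK1
  -- δ : minimal positive slack
  obtain ⟨δ, hδpos, hδle⟩ : ∃ δ : ℝ, 0 < δ ∧ ∀ j, (∑ l, Alim j l * xbar l) ≠ blim j →
      δ ≤ (∑ l, Alim j l * xbar l) - blim j := by
    classical
    set S : Finset (Fin p) := Finset.univ.filter
      (fun j => (∑ l, Alim j l * xbar l) ≠ blim j) with hSdef
    by_cases h : S.Nonempty
    · refine ⟨S.inf' h (fun j => (∑ l, Alim j l * xbar l) - blim j), ?_, ?_⟩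
      · rw [Finset.lt_inf'_iff]
        intro j hj
        rw [hSdef, Finset.mem_filter] at hj
        have := lt_of_le_of_ne (hxbarC j) (Ne.symm hj.2)
        linarith
      · intro j hj
        exact Finset.inf'_le _ (by simp [hSdef, hj])
    · refine ⟨1, one_pos, fun j hj => absurd ?_ h⟩
      exact ⟨j, by simp [hSdef, hj]⟩
  -- constants
  obtain ⟨t₀, ht₀pos, htq⟩ : ∃ t₀ : ℝ, 0 < t₀ ∧ t₀ * ((q:ℝ) * (K + 1)) ≤ δ / 4 := by
    refine ⟨δ / (4 * ((q:ℝ) * (K + 1) + 1)), by positivity, ?_⟩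
    rw [div_mul_eq_mul_div, div_le_div_iff₀ (by positivity) (by norm_num)]
    nlinarith [hδpos.le, hKpos.le]
  obtain ⟨ε₂, hε₂pos, hε₂1, hε₂M⟩ : ∃ ε₂ : ℝ, 0 < ε₂ ∧ ε₂ ≤ 1 ∧
      (q:ℝ) * (ε₂ * M) ≤ δ / 8 := by
    refine ⟨min 1 (δ / (8 * ((q:ℝ) * M + 1))), lt_min one_pos (by positivity),
      min_le_left _ _, ?_⟩
    have h := min_le_right 1 (δ / (8 * ((q:ℝ) * M + 1)))
    have hq : (0:ℝ) ≤ (q:ℝ) * M := by positivity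
    have hpos : (0:ℝ) < (q:ℝ) * M + 1 := by positivity
    have heq : ((q:ℝ) * M + 1) * (δ / (8 * ((q:ℝ) * M + 1))) = δ / 8 := by
      field_simp
    have hminpos : (0:ℝ) ≤ min 1 (δ / (8 * ((q:ℝ) * M + 1))) :=
      le_min zero_le_one (by positivity)
    calc (q:ℝ) * (min 1 (δ / (8 * ((q:ℝ) * M + 1))) * M)
        = ((q:ℝ) * M) * min 1 (δ / (8 * ((q:ℝ) * M + 1))) := by ring
      _ ≤ ((q:ℝ) * M + 1) * min 1 (δ / (8 * ((q:ℝ) * M + 1))) := by nlinarith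
      _ ≤ ((q:ℝ) * M + 1) * (δ / (8 * ((q:ℝ) * M + 1))) :=
          mul_le_mul_of_nonneg_left h hpos.le
      _ = δ / 8 := heq
  obtain ⟨ε₁, hε₁pos, hε₁t, hε₁K⟩ : ∃ ε₁ : ℝ, 0 < ε₁ ∧ ε₁ ≤ t₀ / 2 ∧
      (q:ℝ) * (K * ε₁) ≤ δ / 8 := by
    refine ⟨min (t₀ / 2) (δ / (8 * ((q:ℝ) * K + 1))), lt_min (by positivity) (by positivity),
      min_le_left _ _, ?_⟩
    have h := min_le_right (t₀ / 2) (δ / (8 * ((q:ℝ) * K + 1)))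
    have hq : (0:ℝ) ≤ (q:ℝ) * K := by positivity
    have hpos : (0:ℝ) < (q:ℝ) * K + 1 := by positivity
    have heq : ((q:ℝ) * K + 1) * (δ / (8 * ((q:ℝ) * K + 1))) = δ / 8 := by
      field_simp
    have hminpos : (0:ℝ) ≤ min (t₀ / 2) (δ / (8 * ((q:ℝ) * K + 1))) :=
      le_min (by positivity) (by positivity)
    calc (q:ℝ) * (K * min (t₀ / 2) (δ / (8 * ((q:ℝ) * K + 1))))
        = ((q:ℝ) * K) * min (t₀ / 2) (δ / (8 * ((q:ℝ) * K + 1))) := by ring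
      _ ≤ ((q:ℝ) * K + 1) * min (t₀ / 2) (δ / (8 * ((q:ℝ) * K + 1))) := by nlinarith
      _ ≤ ((q:ℝ) * K + 1) * (δ / (8 * ((q:ℝ) * K + 1))) :=
          mul_le_mul_of_nonneg_left h hpos.le
      _ = δ / 8 := heq
  -- eventual statements
  have h1 := aux_shrink p q A b Alim blim hA hb M hM xbar hC ε₁ hε₁pos
  have h2 : ∀ᶠ k in atTop, dist (A k) Alim < ε₂ :=
    (Metric.tendsto_nhds.mp hA) ε₂ hε₂pos
  have h3 : ∀ᶠ k in atTop, dist (b k) blim < δ / 8 :=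
    (Metric.tendsto_nhds.mp hb) (δ / 8) (by positivity)
  have h0 : ∀ᶠ k in atTop, N ≤ k := eventually_ge_atTop N
  rw [Filter.eventually_atTop] at h0 h1 h2 h3
  obtain ⟨N0, hN0⟩ := h0
  obtain ⟨N1, hN1⟩ := h1
  obtain ⟨N2, hN2⟩ := h2
  obtain ⟨N3, hN3⟩ := h3
  refine ⟨max (max N0 N1) (max N2 N3), fun k hk => ?_⟩
  have hk0 : N ≤ k := hN0 k (le_trans (le_trans (le_max_left _ _) (le_max_left _ _)) hk)
  have hk1 := hN1 k (le_trans (le_trans (le_max_right _ _) (le_max_left _ _)) hk)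
  have hk2 := hN2 k (le_trans (le_trans (le_max_left _ _) (le_max_right _ _)) hk)
  have hk3 := hN3 k (le_trans (le_trans (le_max_right _ _) (le_max_right _ _)) hk)
  obtain ⟨x, hxC, hxeq⟩ := hN k hk0
  -- entrywise bounds from hk2, hk3
  have hAd : ∀ j l, |A k j l - Alim j l| ≤ ε₂ := by
    intro j l
    have h' : dist (A k j l) (Alim j l) ≤ dist (A k) Alim :=
      le_trans (dist_le_pi_dist (A k j) (Alim j) l) (dist_le_pi_dist (A k) Alim j)
    rw [Real.dist_eq] at h'
    linarith
  have hbd : ∀ j, |b k j - blim j| ≤ δ / 8 := by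
    intro j
    have h' : dist (b k j) (blim j) ≤ dist (b k) blim := dist_le_pi_dist (b k) blim j
    rw [Real.dist_eq] at h'
    linarith
  have hAk : ∀ j l, |A k j l| ≤ K + 1 := by
    intro j l
    have h1 := hAd j l
    have h2 := hKb j l
    have := abs_sub_abs_le_abs_sub (A k j l) (Alim j l)
    linarith
  -- slack estimate at x for non-binding constraints
  have hslack : ∀ j, (∑ l, Alim j l * xbar l) ≠ blim j →
      b k j + δ / 2 ≤ ∑ l, A k j l * x l := by
    intro j hj
    have hxnear : ‖x - xbar‖ < ε₁ := hk1 x hxC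
    have hterm : ∀ l, |A k j l * x l - Alim j l * xbar l| ≤ ε₂ * M + K * ε₁ := by
      intro l
      have e1 := hAd j l
      have e2 : |x l| ≤ M := by
        have := norm_le_pi_norm x l
        rw [Real.norm_eq_abs] at this
        exact le_trans this (hM k x hxC)
      have e3 : |x l - xbar l| ≤ ε₁ := by
        have h' := norm_le_pi_norm (x - xbar) l
        rw [Real.norm_eq_abs, Pi.sub_apply] at h'
        linarith
      calc |A k j l * x l - Alim j l * xbar l|
          = |(A k j l - Alim j l) * x l + Alim j l * (x l - xbar l)| := by ring_nf
        _ ≤ |(A k j l - Alim j l) * x l| + |Alim j l * (x l - xbar l)| := abs_add_le _ _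
        _ = |A k j l - Alim j l| * |x l| + |Alim j l| * |x l - xbar l| := by
            rw [abs_mul, abs_mul]
        _ ≤ ε₂ * M + K * ε₁ :=
            add_le_add (mul_le_mul e1 e2 (abs_nonneg _) hε₂pos.le)
              (mul_le_mul (hKb j l) e3 (abs_nonneg _) hKpos.le)
    have hsum : |(∑ l, A k j l * x l) - ∑ l, Alim j l * xbar l|
        ≤ (q:ℝ) * (ε₂ * M + K * ε₁) := by
      rw [← Finset.sum_sub_distrib]
      calc |∑ l, (A k j l * x l - Alim j l * xbar l)|
          ≤ ∑ l, |A k j l * x l - Alim j l * xbar l| := Finset.abs_sum_le_sum_abs _ _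
        _ ≤ ∑ _l : Fin q, (ε₂ * M + K * ε₁) := Finset.sum_le_sum fun l _ => hterm l
        _ = (q:ℝ) * (ε₂ * M + K * ε₁) := by
            rw [Finset.sum_const, Finset.card_fin, nsmul_eq_mul]
    have hδj := hδle j hj
    have habs1 := (abs_le.mp hsum).1
    have habs2' := (abs_le.mp (hbd j)).2
    have hdist : (q:ℝ) * (ε₂ * M + K * ε₁) = (q:ℝ) * (ε₂ * M) + (q:ℝ) * (K * ε₁) := by
      ring
    linarith
  -- the singleton
  refine ⟨x, Set.eq_singleton_iff_unique_mem.mpr ⟨hxC, ?_⟩⟩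
  intro y hy
  by_contra hne
  have hyx : y - x ≠ 0 := sub_ne_zero.mpr hne
  have hnyx : (0:ℝ) < ‖y - x‖ := norm_pos_iff.mpr hyx
  set d : Fin q → ℝ := ‖y - x‖⁻¹ • (y - x) with hddef
  have hd1 : ‖d‖ = 1 := by
    rw [hddef, norm_smul, norm_inv, norm_norm, inv_mul_cancel₀ hnyx.ne']
  have hdl : ∀ l, |d l| ≤ 1 := by
    intro l
    have := norm_le_pi_norm d l
    rw [Real.norm_eq_abs, hd1] at this
    exact this
  set z : Fin q → ℝ := x + t₀ • d with hzdef
  have hzsum : ∀ j, (∑ l, A k j l * z l)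
      = (∑ l, A k j l * x l) + t₀ * ∑ l, A k j l * d l := by
    intro j
    rw [Finset.mul_sum, ← Finset.sum_add_distrib]
    refine Finset.sum_congr rfl fun l _ => ?_
    simp only [hzdef, Pi.add_apply, Pi.smul_apply, smul_eq_mul]
    ring
  have hzC : ∀ j, b k j ≤ ∑ l, A k j l * z l := by
    intro j
    rw [hzsum j]
    by_cases hj : (∑ l, Alim j l * xbar l) = blim j
    · have he := hxeq j hj
      have hd0 : 0 ≤ ∑ l, A k j l * d l := by
        have hform : (∑ l, A k j l * d l)
            = ‖y - x‖⁻¹ * ((∑ l, A k j l * y l) - ∑ l, A k j l * x l) := by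
          rw [← Finset.sum_sub_distrib, Finset.mul_sum]
          refine Finset.sum_congr rfl fun l _ => ?_
          simp only [hddef, Pi.smul_apply, Pi.sub_apply, smul_eq_mul]
          ring
        rw [hform]
        have hge : 0 ≤ (∑ l, A k j l * y l) - ∑ l, A k j l * x l := by
          rw [he]
          have := hy j
          linarith
        exact mul_nonneg (inv_nonneg.mpr (norm_nonneg _)) hge
      rw [he]
      nlinarith [mul_nonneg ht₀pos.le hd0]
    · have hs := hslack j hj
      have hdsum : |∑ l, A k j l * d l| ≤ (q:ℝ) * (K + 1) := by
        calc |∑ l, A k j l * d l| ≤ ∑ l, |A k j l * d l| := Finset.abs_sum_le_sum_abs _ _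
          _ ≤ ∑ _l : Fin q, (K + 1) := by
              refine Finset.sum_le_sum fun l _ => ?_
              rw [abs_mul]
              calc |A k j l| * |d l| ≤ (K + 1) * 1 :=
                    mul_le_mul (hAk j l) (hdl l) (abs_nonneg _) (by linarith)
                _ = K + 1 := mul_one _
          _ = (q:ℝ) * (K + 1) := by rw [Finset.sum_const, Finset.card_fin, nsmul_eq_mul]
      have hb1 := (abs_le.mp hdsum).1
      have hmul := mul_le_mul_of_nonneg_left hb1 ht₀pos.le
      rw [mul_neg] at hmul
      linarith
  -- contradiction: z is far from xbar
  have h1z := hk1 z hzC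
  have h1x := hk1 x hxC
  have hzx : ‖z - x‖ = t₀ := by
    have hzx' : z - x = t₀ • d := by rw [hzdef]; abel
    rw [hzx', norm_smul, hd1, mul_one, Real.norm_eq_abs, abs_of_pos ht₀pos]
  have htri : ‖z - x‖ ≤ ‖z - xbar‖ + ‖xbar - x‖ := by
    have := dist_triangle z xbar x
    simpa [dist_eq_norm] using this
  rw [norm_sub_rev xbar x] at htri
  rw [hzx] at htri
  linarith
end

section
/- Let (A_k) be a sequence of p×q real matrices converging to a matrix A, (b_k) a sequence of vectors in ℝ^p converging to b, and C_k = {x ∈ ℝ^q : A_k x ≥ b_k} (componentwise). Assume there exists M ∈ ℝ such that ‖x‖ ≤ M for every k and every x ∈ C_k, and assume the limit set C = {x ∈ ℝ^q : A x ≥ b} is a singleton {x̄}. Then for every index j with (A x̄)_j > b_j there exists N such that for all k ≥ N and every x ∈ C_k one has (A_k x)_j > (b_k)_j. -/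
open Filter

/-- Let `A k → A∞` be `p × q` matrices, `b k → b∞` vectors in `ℝ^p`, and
`C k = {x | A k x ≥ b k}` componentwise. If the sets `C k` are uniformly bounded and the
limit set `C = {x | A∞ x ≥ b∞}` is the singleton `{xbar}`, then every constraint `j` that
is non-binding at `xbar` is, for all large `k`, satisfied with strict
inequality by every point of `C k`. -/
theorem statement3 (p q : ℕ) (A : ℕ → Fin p → Fin q → ℝ) (b : ℕ → Fin p → ℝ)
    (Alim : Fin p → Fin q → ℝ) (blim : Fin p → ℝ)
    (hA : Tendsto A atTop (nhds Alim)) (hb : Tendsto b atTop (nhds blim))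
    (M : ℝ)
    (hM : ∀ k, ∀ x : Fin q → ℝ, (∀ j, b k j ≤ ∑ l, A k j l * x l) → ‖x‖ ≤ M)
    (xbar : Fin q → ℝ)
    (hC : {x : Fin q → ℝ | ∀ j, blim j ≤ ∑ l, Alim j l * x l} = {xbar})
    (j : Fin p) (hj : blim j < ∑ l, Alim j l * xbar l) :
    ∃ N : ℕ, ∀ k, N ≤ k → ∀ x : Fin q → ℝ,
      (∀ j', b k j' ≤ ∑ l, A k j' l * x l) → b k j < ∑ l, A k j l * x l := by
  by_contra h
  push_neg at h
  -- choose for each n an index k n ≥ n and a point x n violating strictness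
  choose k hk x hxfeas hxeq using h
  -- the points are bounded
  have hbound : ∀ n, x n ∈ Metric.closedBall (0 : Fin q → ℝ) M := by
    intro n
    simpa [Metric.mem_closedBall, dist_eq_norm] using hM (k n) (x n) (hxfeas n)
  obtain ⟨z, _, φ, hφ, hz⟩ :=
    tendsto_subseq_of_bounded Metric.isBounded_closedBall hbound
  -- k ∘ φ tends to infinity
  have hkφ : Tendsto (fun n => k (φ n)) atTop atTop :=
    tendsto_atTop_mono (fun n => le_trans (hφ.id_le n) (hk (φ n))) tendsto_id
  have hAφ : Tendsto (fun n => A (k (φ n))) atTop (nhds Alim) := hA.comp hkφ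
  have hbφ : Tendsto (fun n => b (k (φ n))) atTop (nhds blim) := hb.comp hkφ
  -- coordinatewise convergence
  have hAc : ∀ (i : Fin p) (l : Fin q),
      Tendsto (fun n => A (k (φ n)) i l) atTop (nhds (Alim i l)) := by
    intro i l
    have := tendsto_pi_nhds.1 hAφ i
    exact tendsto_pi_nhds.1 this l
  have hbc : ∀ (i : Fin p), Tendsto (fun n => b (k (φ n)) i) atTop (nhds (blim i)) :=
    fun i => tendsto_pi_nhds.1 hbφ i
  have hxc : ∀ l : Fin q, Tendsto (fun n => x (φ n) l) atTop (nhds (z l)) :=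
    fun l => tendsto_pi_nhds.1 hz l
  have hsum : ∀ i : Fin p,
      Tendsto (fun n => ∑ l, A (k (φ n)) i l * x (φ n) l) atTop
        (nhds (∑ l, Alim i l * z l)) := by
    intro i
    exact tendsto_finset_sum _ (fun l _ => (hAc i l).mul (hxc l))
  -- z is feasible for the limit problem
  have hzfeas : ∀ i : Fin p, blim i ≤ ∑ l, Alim i l * z l := by
    intro i
    exact le_of_tendsto_of_tendsto' (hbc i) (hsum i) (fun n => hxfeas (φ n) i)
  have hzmem : z ∈ ({xbar} : Set (Fin q → ℝ)) := hC ▸ hzfeas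
  have hzx : z = xbar := hzmem
  -- but the j-th constraint is binding along the sequence
  have heq : ∀ n, ∑ l, A (k (φ n)) j l * x (φ n) l = b (k (φ n)) j :=
    fun n => le_antisymm (hxeq (φ n)) (hxfeas (φ n) j)
  have hlim : Tendsto (fun n => ∑ l, A (k (φ n)) j l * x (φ n) l) atTop (nhds (blim j)) :=
    (hbc j).congr (fun n => (heq n).symm)
  have : (∑ l, Alim j l * z l) = blim j := tendsto_nhds_unique (hsum j) hlim
  rw [hzx] at this
  exact absurd this.symm (ne_of_lt hj)
end

section
/- If a finite n-player game G has a unique Nash equilibrium σ and this Nash equilibrium is quasi-strict, then there exists a neighborhood Ω of G (in the space of games of the same size) such that for every game Ĝ ∈ Ω and every Nash equilibrium σ̂ of Ĝ, the support of σ̂^i equals the support of σ^i for every player i, and σ̂ is quasi-strict. -/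
/-- The set of pure strategy profiles of an `n`-player game in which
player `i` has `m i` pure strategies. -/
abbrev Strat {n : ℕ} (m : Fin n → ℕ) : Type := ∀ i, Fin (m i)

/-- An `n`-player game of size `m 0 × ⋯ × m (n-1)`: player `i`'s payoff function is `G i`.
The space of such games carries the (product, i.e. Euclidean) topology. -/
abbrev Game {n : ℕ} (m : Fin n → ℕ) : Type := Fin n → Strat m → ℝ

/-- The Dirac (pure) mixed strategy concentrated on `a`. -/
def pureStrat {k : ℕ} (a : Fin k) : Fin k → ℝ := fun b => if b = a then 1 else 0

/-- A mixed strategy profile: each player plays a probability distribution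
on her pure strategies. -/
def IsMixedProfile {n : ℕ} {m : Fin n → ℕ} (σ : ∀ i, Fin (m i) → ℝ) : Prop :=
  ∀ i, (∀ a, 0 ≤ σ i a) ∧ ∑ a, σ i a = 1

/-- Multilinear extension of player `i`'s payoff to mixed strategy profiles. -/
def mixedPayoff {n : ℕ} {m : Fin n → ℕ} (G : Game m) (i : Fin n)
    (σ : ∀ j, Fin (m j) → ℝ) : ℝ :=
  ∑ s : Strat m, (∏ j, σ j (s j)) * G i s

/-- Player `i`'s payoff when deviating to the pure strategy `t`, the others
keeping their strategies in `σ`: this is `Uⁱ(t, σ⁻ⁱ)`. -/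
def devPayoff {n : ℕ} {m : Fin n → ℕ} (G : Game m) (i : Fin n)
    (σ : ∀ j, Fin (m j) → ℝ) (t : Fin (m i)) : ℝ :=
  mixedPayoff G i (Function.update σ i (pureStrat t))

/-- Nash equilibrium: no player gains by a unilateral pure deviation. -/
def IsNash {n : ℕ} {m : Fin n → ℕ} (G : Game m) (σ : ∀ i, Fin (m i) → ℝ) : Prop :=
  IsMixedProfile σ ∧ ∀ (i : Fin n) (t : Fin (m i)), devPayoff G i σ t ≤ mixedPayoff G i σ

/-- Quasi-strictness: for every player `i`, every pure best response to `σ⁻ⁱ`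
belongs to the support of `σ i`. -/
def IsQuasiStrict {n : ℕ} {m : Fin n → ℕ} (G : Game m) (σ : ∀ i, Fin (m i) → ℝ) : Prop :=
  ∀ (i : Fin n) (t : Fin (m i)),
    (∀ t' : Fin (m i), devPayoff G i σ t' ≤ devPayoff G i σ t) → 0 < σ i t

abbrev Prof {n : ℕ} (m : Fin n → ℕ) : Type := ∀ i, Fin (m i) → ℝ

lemma update_eval {n : ℕ} {m : Fin n → ℕ} (σ : Prof m) (i : Fin n) (c : Fin (m i) → ℝ)
    (s : Strat m) (j : Fin n) :
    Function.update σ i c j (s j) = Function.update (fun j => σ j (s j)) i (c (s i)) j := by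
  rcases eq_or_ne j i with h | h
  · subst h; simp
  · simp [Function.update_of_ne h]

lemma decomp {n : ℕ} {m : Fin n → ℕ} (G : Game m) (i : Fin n) (σ : Prof m) :
    ∑ t, σ i t * devPayoff G i σ t = mixedPayoff G i σ := by
  unfold devPayoff mixedPayoff
  simp_rw [Finset.mul_sum]
  rw [Finset.sum_comm]
  refine Finset.sum_congr rfl fun s _ => ?_
  have key : ∀ t : Fin (m i),
      (∏ j, Function.update σ i (pureStrat t) j (s j)) =
        pureStrat t (s i) * ∏ j ∈ Finset.univ.erase i, σ j (s j) := by
    intro t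
    rw [Finset.prod_congr rfl fun j _ => update_eval σ i (pureStrat t) s j,
      Finset.prod_update_of_mem (Finset.mem_univ i), Finset.erase_eq]
  calc ∑ t, σ i t * ((∏ j, Function.update σ i (pureStrat t) j (s j)) * G i s)
      = ∑ t, if s i = t then σ i t * ((∏ j ∈ Finset.univ.erase i, σ j (s j)) * G i s) else 0 := by
        refine Finset.sum_congr rfl fun t _ => ?_
        rw [key t]
        unfold pureStrat
        split <;> ring
    _ = σ i (s i) * ((∏ j ∈ Finset.univ.erase i, σ j (s j)) * G i s) := by
        rw [Finset.sum_ite_eq]; simp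
    _ = (∏ j, σ j (s j)) * G i s := by
        rw [← mul_assoc, Finset.mul_prod_erase Finset.univ (fun j => σ j (s j)) (Finset.mem_univ i)]

lemma contMixed {n : ℕ} (m : Fin n → ℕ) (i : Fin n) :
    Continuous (fun p : Game m × Prof m => mixedPayoff p.1 i p.2) := by
  unfold mixedPayoff
  refine continuous_finset_sum _ fun s _ => Continuous.mul ?_ ?_
  · exact continuous_finset_prod _ fun j _ =>
      (continuous_apply (s j)).comp ((continuous_apply j).comp continuous_snd)
  · exact (continuous_apply s).comp ((continuous_apply i).comp continuous_fst)

lemma contDev {n : ℕ} (m : Fin n → ℕ) (i : Fin n) (t : Fin (m i)) :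
    Continuous (fun p : Game m × Prof m => devPayoff p.1 i p.2 t) := by
  unfold devPayoff
  exact (contMixed m i).comp
    (continuous_fst.prodMk (continuous_snd.update i continuous_const))

lemma isClosed_nash {n : ℕ} (m : Fin n → ℕ) :
    IsClosed {p : Game m × Prof m | IsNash p.1 p.2} := by
  have heq : {p : Game m × Prof m | IsNash p.1 p.2} =
      (⋂ i, ⋂ a, {p : Game m × Prof m | 0 ≤ p.2 i a}) ∩
      ((⋂ i, {p : Game m × Prof m | ∑ a, p.2 i a = 1}) ∩
      (⋂ i, ⋂ t, {p : Game m × Prof m | devPayoff p.1 i p.2 t ≤ mixedPayoff p.1 i p.2})) := by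
    ext p
    simp only [IsNash, IsMixedProfile, Set.mem_inter_iff, Set.mem_iInter, Set.mem_setOf_eq]
    constructor
    · rintro ⟨h1, h2⟩; exact ⟨fun i a => (h1 i).1 a, fun i => (h1 i).2, h2⟩
    · rintro ⟨h1, h2, h3⟩; exact ⟨fun i => ⟨h1 i, h2 i⟩, h3⟩
  rw [heq]
  refine IsClosed.inter ?_ (IsClosed.inter ?_ ?_)
  · exact isClosed_iInter fun i => isClosed_iInter fun a =>
      isClosed_le continuous_const ((continuous_apply a).comp ((continuous_apply i).comp continuous_snd))
  · exact isClosed_iInter fun i => isClosed_eq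
      (continuous_finset_sum _ fun a _ =>
        (continuous_apply a).comp ((continuous_apply i).comp continuous_snd)) continuous_const
  · exact isClosed_iInter fun i => isClosed_iInter fun t =>
      isClosed_le (contDev m i t) (contMixed m i)

lemma isCompact_profiles {n : ℕ} (m : Fin n → ℕ) :
    IsCompact {σ : Prof m | IsMixedProfile σ} := by
  have heq : {σ : Prof m | IsMixedProfile σ} =
      Set.univ.pi (fun i => stdSimplex ℝ (Fin (m i))) := by
    ext σ
    simp [IsMixedProfile, Set.mem_univ_pi, stdSimplex]
  rw [heq]
  exact isCompact_univ_pi fun i => isCompact_stdSimplex _ _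

lemma nash_pos_eq {n : ℕ} {m : Fin n → ℕ} {G' : Game m} {σ' : Prof m} (h : IsNash G' σ')
    (i : Fin n) (a : Fin (m i)) (ha : 0 < σ' i a) :
    devPayoff G' i σ' a = mixedPayoff G' i σ' := by
  have hnn : ∀ t ∈ Finset.univ, 0 ≤ σ' i t * (mixedPayoff G' i σ' - devPayoff G' i σ' t) :=
    fun t _ => mul_nonneg ((h.1 i).1 t) (sub_nonneg.2 (h.2 i t))
  have hsum : ∑ t, σ' i t * (mixedPayoff G' i σ' - devPayoff G' i σ' t) = 0 := by
    simp_rw [mul_sub]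
    rw [Finset.sum_sub_distrib, decomp, ← Finset.sum_mul, (h.1 i).2, one_mul, sub_self]
  have h0 := (Finset.sum_eq_zero_iff_of_nonneg hnn).1 hsum a (Finset.mem_univ a)
  rcases mul_eq_zero.1 h0 with h' | h'
  · exact absurd h' (ne_of_gt ha)
  · linarith

lemma stage1 {n : ℕ} {m : Fin n → ℕ} (G : Game m) (σ : Prof m)
    (huniq : ∀ τ, IsNash G τ → τ = σ) (V : Set (Prof m)) (hV : IsOpen V) (hσV : σ ∈ V) :
    ∃ Ω ∈ nhds G, ∀ G' ∈ Ω, ∀ σ', IsNash G' σ' → σ' ∈ V := by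
  classical
  by_contra hcon
  push_neg at hcon
  set Bad : Set (Game m) := {G' | ∃ σ', IsNash G' σ' ∧ σ' ∉ V} with hBadDef
  have hclos : G ∈ closure Bad := by
    rw [mem_closure_iff_nhds]
    intro t ht
    obtain ⟨G', hG't, σ', hσ'1, hσ'2⟩ := hcon t ht
    exact ⟨G', hG't, σ', hσ'1, hσ'2⟩
  set F : Filter (Game m) := nhds G ⊓ Filter.principal Bad with hFdef
  have hFne : F.NeBot := mem_closure_iff_clusterPt.1 hclos
  choose! f hf using fun (G' : Game m) (h : G' ∈ Bad) => h
  have hmem : Bad ∈ F := Filter.le_principal_iff.1 inf_le_right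
  set K : Set (Prof m) := {σ' | IsMixedProfile σ'} ∩ Vᶜ with hKdef
  have hKcomp : IsCompact K := (isCompact_profiles m).inter_right hV.isClosed_compl
  have hmapK : Filter.map f F ≤ Filter.principal K := by
    rw [Filter.le_principal_iff, Filter.mem_map]
    exact Filter.mem_of_superset hmem fun G' hG' => ⟨(hf G' hG').1.1, (hf G' hG').2⟩
  haveI : (Filter.map f F).NeBot := hFne.map f
  obtain ⟨τ, hτK, hclust⟩ := hKcomp.exists_clusterPt hmapK
  set g : Game m → Game m × Prof m := fun G' => (G', f G') with hgdef
  have hfst : Filter.map g F ≤ Filter.comap Prod.fst (nhds G) := by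
    rw [Filter.map_le_iff_le_comap, Filter.comap_comap]
    exact inf_le_left.trans (le_of_eq (Filter.comap_id (f := nhds G)).symm)
  have hsnd : (Filter.comap Prod.snd (nhds τ) ⊓ Filter.map g F).NeBot := by
    have hb : Filter.map Prod.snd (Filter.map g F ⊓ Filter.comap Prod.snd (nhds τ)) =
        Filter.map f F ⊓ nhds τ := by
      rw [Filter.push_pull, Filter.map_map]; rfl
    have hcl : (Filter.map f F ⊓ nhds τ).NeBot := by
      rw [inf_comm]; exact hclust
    have h1 : Filter.map Prod.snd (Filter.map g F ⊓ Filter.comap Prod.snd (nhds τ)) ≠ ⊥ := by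
      rw [hb]; exact hcl.ne'
    have h2 : Filter.map g F ⊓ Filter.comap Prod.snd (nhds τ) ≠ ⊥ := by
      intro h; exact h1 (by rw [h, Filter.map_bot])
    rw [inf_comm]; exact ⟨h2⟩
  have hpair : ClusterPt (G, τ) (Filter.map g F) := by
    show (nhds (G, τ) ⊓ Filter.map g F).NeBot
    rw [nhds_prod_eq, Filter.prod_eq_inf, inf_assoc,
      inf_eq_right.2 (le_trans inf_le_right hfst)]
    exact hsnd
  have hNashSet : Filter.map g F ≤ Filter.principal {p : Game m × Prof m | IsNash p.1 p.2} := by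
    rw [Filter.le_principal_iff, Filter.mem_map]
    exact Filter.mem_of_superset hmem fun G' hG' => (hf G' hG').1
  have hτNash : IsNash G τ :=
    isClosed_iff_clusterPt.1 (isClosed_nash m) (G, τ) (hpair.mono hNashSet)
  have hτσ : τ = σ := huniq τ hτNash
  exact hτK.2 (hτσ ▸ hσV)

/-- if a game `G` has a unique Nash equilibrium `σ` and `σ` is quasi-strict,
then there is a neighborhood `Ω` of `G` such that every Nash equilibrium of every game in
`Ω` has (player by player) the same support as `σ` and is quasi-strict. -/
theorem statement5 {n : ℕ} (m : Fin n → ℕ) (hm : ∀ i, 0 < m i) (G : Game m)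
    (σ : ∀ i, Fin (m i) → ℝ) (hσ : IsNash G σ) (huniq : ∀ τ, IsNash G τ → τ = σ)
    (hqs : IsQuasiStrict G σ) :
    ∃ Ω ∈ nhds G, ∀ G' ∈ Ω, ∀ σ' : ∀ i, Fin (m i) → ℝ, IsNash G' σ' →
      (∀ i, {a | 0 < σ' i a} = {a | 0 < σ i a}) ∧ IsQuasiStrict G' σ' := by
  classical
  have hprofσ := hσ.1
  have gap : ∀ i a, σ i a = 0 → devPayoff G i σ a < mixedPayoff G i σ := by
    intro i a ha
    refine lt_of_le_of_ne (hσ.2 i a) fun heq => ?_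
    have hpos : 0 < σ i a := hqs i a fun t' => heq ▸ hσ.2 i t'
    rw [ha] at hpos
    exact lt_irrefl 0 hpos
  -- the open neighborhood in the product space
  have hWopen : ∀ (i : Fin n) (a : Fin (m i)),
      IsOpen {p : Game m × Prof m |
        (σ i a = 0 → devPayoff p.1 i p.2 a < mixedPayoff p.1 i p.2) ∧
        (0 < σ i a → 0 < p.2 i a)} := by
    intro i a
    rcases ((hprofσ i).1 a).eq_or_lt with h0 | h0
    · convert isOpen_lt (contDev m i a) (contMixed m i) using 1
      ext p
      simp [← h0]
    · convert isOpen_lt (continuous_const : Continuous fun _ : Game m × Prof m => (0:ℝ))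
        ((continuous_apply a).comp ((continuous_apply i).comp continuous_snd) :
          Continuous fun p : Game m × Prof m => p.2 i a) using 1
      ext p
      simp [h0, h0.ne']
  set U : Set (Game m × Prof m) := ⋂ i, ⋂ a, {p : Game m × Prof m |
        (σ i a = 0 → devPayoff p.1 i p.2 a < mixedPayoff p.1 i p.2) ∧
        (0 < σ i a → 0 < p.2 i a)} with hUdef
  have hUopen : IsOpen U :=
    isOpen_iInter_of_finite fun i => isOpen_iInter_of_finite fun a => hWopen i a
  have hGσU : (G, σ) ∈ U := by
    rw [hUdef]
    simp only [Set.mem_iInter, Set.mem_setOf_eq]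
    exact fun i a => ⟨gap i a, fun h => h⟩
  obtain ⟨Ω₀, hΩ₀, V, hVnhds, hprod⟩ := mem_nhds_prod_iff.1 (hUopen.mem_nhds hGσU)
  obtain ⟨V', hV'sub, hV'open, hσV'⟩ := mem_nhds_iff.1 hVnhds
  obtain ⟨Ω₁, hΩ₁, hΩ₁spec⟩ := stage1 G σ huniq V' hV'open hσV'
  refine ⟨Ω₀ ∩ Ω₁, Filter.inter_mem hΩ₀ hΩ₁, fun G' hG' σ' hN => ?_⟩
  have hσ'V : σ' ∈ V := hV'sub (hΩ₁spec G' hG'.2 σ' hN)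
  have hpU : (G', σ') ∈ U := hprod (Set.mem_prod.2 ⟨hG'.1, hσ'V⟩)
  rw [hUdef] at hpU
  simp only [Set.mem_iInter, Set.mem_setOf_eq] at hpU
  -- zero stays zero
  have hz : ∀ i a, σ i a = 0 → σ' i a = 0 := by
    intro i a h0
    by_contra hne
    have hpos : 0 < σ' i a := lt_of_le_of_ne ((hN.1 i).1 a) (Ne.symm hne)
    have heq := nash_pos_eq hN i a hpos
    have hlt := (hpU i a).1 h0
    rw [heq] at hlt
    exact lt_irrefl _ hlt
  have hsupp : ∀ i, {a | 0 < σ' i a} = {a | 0 < σ i a} := by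
    intro i
    ext a
    simp only [Set.mem_setOf_eq]
    constructor
    · intro h
      by_contra hns
      have h0 : σ i a = 0 := le_antisymm (not_lt.1 hns) ((hprofσ i).1 a)
      rw [hz i a h0] at h
      exact lt_irrefl 0 h
    · exact (hpU i a).2
  refine ⟨hsupp, fun i t hbest => ?_⟩
  by_contra hnp
  have ht0 : σ' i t = 0 := le_antisymm (not_lt.1 hnp) ((hN.1 i).1 t)
  have hσt0 : σ i t = 0 := by
    by_contra hns
    have : 0 < σ i t := lt_of_le_of_ne ((hprofσ i).1 t) (Ne.symm hns)
    have := (hpU i t).2 this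
    rw [ht0] at this
    exact lt_irrefl 0 this
  have hlt := (hpU i t).1 hσt0
  have hup : mixedPayoff G' i σ' ≤ devPayoff G' i σ' t := by
    rw [← decomp G' i σ']
    calc ∑ a, σ' i a * devPayoff G' i σ' a
        ≤ ∑ a, σ' i a * devPayoff G' i σ' t :=
          Finset.sum_le_sum fun a _ => mul_le_mul_of_nonneg_left (hbest a) ((hN.1 i).1 a)
      _ = devPayoff G' i σ' t := by rw [← Finset.sum_mul, (hN.1 i).2, one_mul]
  linarith
end

section
/- For every number of players n and every size vector (m₁,…,m_n), the set of n-player games of size m₁×…×m_n having a unique Nash equilibrium which moreover is a strict equilibrium is an open subset of the set of all games of size m₁×…×m_n. -/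
/-- A strict equilibrium: a pure profile `s` such that, for each player `i`, the strategy
`s i` is the *unique* best response to `s⁻ⁱ`. -/
def IsStrictEq {n : ℕ} {m : Fin n → ℕ} (G : Game m) (σ : ∀ i, Fin (m i) → ℝ) : Prop :=
  ∃ s : Strat m, (σ = fun j => pureStrat (s j)) ∧
    ∀ (i : Fin n) (t : Fin (m i)), t ≠ s i → G i (Function.update s i t) < G i s

open Filter Topology

section Aux

variable {n : ℕ} {m : Fin n → ℕ}

lemma continuous_mixedPayoff (i : Fin n) :
    Continuous fun p : Game m × (∀ j, Fin (m j) → ℝ) => mixedPayoff p.1 i p.2 := by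
  unfold mixedPayoff
  refine continuous_finset_sum _ fun s _ => Continuous.mul ?_ ?_
  · exact continuous_finset_prod _ fun j _ =>
      ((continuous_apply (s j)).comp ((continuous_apply j).comp continuous_snd))
  · exact (continuous_apply s).comp ((continuous_apply i).comp continuous_fst)

lemma continuous_devPayoff (i : Fin n) (t : Fin (m i)) :
    Continuous fun p : Game m × (∀ j, Fin (m j) → ℝ) => devPayoff p.1 i p.2 t := by
  have h : Continuous fun p : Game m × (∀ j, Fin (m j) → ℝ) =>
      (p.1, Function.update p.2 i (pureStrat t)) :=
    continuous_fst.prodMk (continuous_snd.update i continuous_const)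
  exact (continuous_mixedPayoff i).comp h

lemma prod_pureStrat (s s' : Strat m) :
    (∏ j, pureStrat (s j) (s' j)) = if s' = s then 1 else 0 := by
  by_cases h : s' = s
  · subst h; simp [pureStrat]
  · obtain ⟨j, hj⟩ := Function.ne_iff.mp h
    rw [if_neg h]
    exact Finset.prod_eq_zero (Finset.mem_univ j) (by simp [pureStrat, hj])

lemma mixedPayoff_pure (G : Game m) (i : Fin n) (s : Strat m) :
    mixedPayoff G i (fun j => pureStrat (s j)) = G i s := by
  unfold mixedPayoff
  simp [prod_pureStrat, ite_mul]

lemma update_pureProfile (s : Strat m) (i : Fin n) (t : Fin (m i)) :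
    Function.update (fun j => pureStrat (s j)) i (pureStrat t)
      = fun j => pureStrat (Function.update s i t j) := by
  funext j
  rcases eq_or_ne j i with rfl | hj
  · simp
  · simp [Function.update_of_ne hj]

lemma devPayoff_pure (G : Game m) (i : Fin n) (s : Strat m) (t : Fin (m i)) :
    devPayoff G i (fun j => pureStrat (s j)) t = G i (Function.update s i t) := by
  rw [devPayoff, update_pureProfile, mixedPayoff_pure]

lemma mixedPayoff_eq_sum (G : Game m) (i : Fin n) (σ : ∀ j, Fin (m j) → ℝ) :
    mixedPayoff G i σ = ∑ t, σ i t * devPayoff G i σ t := by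
  classical
  have key : ∀ (t : Fin (m i)) (s' : Strat m),
      (∏ j, Function.update σ i (pureStrat t) j (s' j))
        = (if s' i = t then 1 else 0) * ∏ j ∈ Finset.univ.erase i, σ j (s' j) := by
    intro t s'
    rw [← Finset.mul_prod_erase Finset.univ
      (fun j => Function.update σ i (pureStrat t) j (s' j)) (Finset.mem_univ i)]
    congr 1
    · simp [pureStrat]
    · exact Finset.prod_congr rfl fun j hj => by
        rw [Function.update_of_ne (Finset.ne_of_mem_erase hj)]
  unfold devPayoff mixedPayoff
  simp only [key, Finset.mul_sum]
  rw [Finset.sum_comm]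
  refine Finset.sum_congr rfl fun s' _ => ?_
  have h2 : ∑ t, σ i t * ((if s' i = t then 1 else 0)
        * (∏ j ∈ Finset.univ.erase i, σ j (s' j)) * G i s')
      = ∑ t, (if s' i = t then
          σ i t * ((∏ j ∈ Finset.univ.erase i, σ j (s' j)) * G i s') else 0) :=
    Finset.sum_congr rfl fun t _ => by split_ifs <;> ring
  rw [h2, Finset.sum_ite_eq, if_pos (Finset.mem_univ _),
    ← Finset.mul_prod_erase Finset.univ (fun j => σ j (s' j)) (Finset.mem_univ i)]
  ring

lemma nash_support {G : Game m} {τ : ∀ j, Fin (m j) → ℝ} (hτ : IsNash G τ)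
    (i : Fin n) (t₀ : Fin (m i))
    (hlt : ∀ t, t ≠ t₀ → devPayoff G i τ t < devPayoff G i τ t₀) :
    τ i = pureStrat t₀ := by
  have hnn := (hτ.1 i).1
  have hsum := (hτ.1 i).2
  have hzero : ∀ t, t ≠ t₀ → τ i t = 0 := by
    intro t ht
    by_contra h
    have hpos : 0 < τ i t := lt_of_le_of_ne (hnn t) (Ne.symm h)
    have hle : ∀ t', devPayoff G i τ t' ≤ devPayoff G i τ t₀ := by
      intro t'
      rcases eq_or_ne t' t₀ with rfl | h'
      · exact le_refl _
      · exact (hlt t' h').le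
    have h1 : mixedPayoff G i τ < devPayoff G i τ t₀ := by
      rw [mixedPayoff_eq_sum]
      calc ∑ t', τ i t' * devPayoff G i τ t'
          < ∑ t', τ i t' * devPayoff G i τ t₀ := by
            apply Finset.sum_lt_sum
            · intro t' _; exact mul_le_mul_of_nonneg_left (hle t') (hnn t')
            · exact ⟨t, Finset.mem_univ t, mul_lt_mul_of_pos_left (hlt t ht) hpos⟩
        _ = devPayoff G i τ t₀ := by rw [← Finset.sum_mul, hsum, one_mul]
    exact absurd (hτ.2 i t₀) (not_le.mpr h1)
  have h1 : τ i t₀ = 1 :=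
    (Finset.sum_eq_single t₀ (fun b _ hb => hzero b hb)
      (fun h => absurd (Finset.mem_univ t₀) h)).symm.trans hsum
  funext b
  rcases eq_or_ne b t₀ with rfl | hb
  · simp [pureStrat, h1]
  · simp [pureStrat, hb, hzero b hb]

lemma isMixedProfile_pure (s : Strat m) : IsMixedProfile (fun j => pureStrat (s j)) := by
  intro j
  constructor
  · intro a
    dsimp only [pureStrat]
    split_ifs <;> norm_num
  · simp [pureStrat]

lemma nash_of_strict {G : Game m} {s : Strat m}
    (h : ∀ (i : Fin n) (t : Fin (m i)), t ≠ s i → G i (Function.update s i t) < G i s) :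
    IsNash G (fun j => pureStrat (s j)) := by
  refine ⟨isMixedProfile_pure s, fun i t => ?_⟩
  rw [devPayoff_pure, mixedPayoff_pure]
  rcases eq_or_ne t (s i) with rfl | ht
  · rw [Function.update_eq_self]
  · exact (h i t ht).le

lemma isCompact_mixedProfiles :
    IsCompact {τ : ∀ j, Fin (m j) → ℝ | IsMixedProfile τ} := by
  have hsub : {τ : ∀ j, Fin (m j) → ℝ | IsMixedProfile τ}
      ⊆ Set.univ.pi fun j => Set.univ.pi fun _ => Set.Icc (0:ℝ) 1 := by
    intro τ hτ j _
    intro a _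
    refine ⟨(hτ j).1 a, ?_⟩
    calc τ j a ≤ ∑ b, τ j b :=
          Finset.single_le_sum (fun b _ => (hτ j).1 b) (Finset.mem_univ a)
      _ = 1 := (hτ j).2
  have heq : {τ : ∀ j, Fin (m j) → ℝ | IsMixedProfile τ}
      = (⋂ j, ⋂ a, {τ : ∀ j, Fin (m j) → ℝ | 0 ≤ τ j a})
        ∩ ⋂ j, {τ : ∀ j, Fin (m j) → ℝ | ∑ a, τ j a = 1} := by
    ext τ
    simp only [Set.mem_setOf_eq, Set.mem_inter_iff, Set.mem_iInter]
    exact ⟨fun h => ⟨fun j a => (h j).1 a, fun j => (h j).2⟩,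
      fun h j => ⟨fun a => h.1 j a, h.2 j⟩⟩
  have hclosed : IsClosed {τ : ∀ j, Fin (m j) → ℝ | IsMixedProfile τ} := by
    rw [heq]
    refine IsClosed.inter ?_ ?_
    · refine isClosed_iInter fun j => isClosed_iInter fun a => ?_
      exact isClosed_le continuous_const ((continuous_apply a).comp (continuous_apply j))
    · refine isClosed_iInter fun j => ?_
      exact isClosed_eq (continuous_finset_sum _ fun a _ =>
        (continuous_apply a).comp (continuous_apply j)) continuous_const
  exact IsCompact.of_isClosed_subset
    (isCompact_univ_pi fun j => isCompact_univ_pi fun _ => isCompact_Icc) hclosed hsub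

end Aux

/-- the set of `n`-player games of size `m 0 × ⋯ × m (n-1)` having a unique
Nash equilibrium which moreover is strict is open. -/
theorem statement7 (n : ℕ) (m : Fin n → ℕ) (hm : ∀ i, 0 < m i) :
    IsOpen {G : Game m | ∃ σ : ∀ i, Fin (m i) → ℝ,
      IsNash G σ ∧ (∀ τ, IsNash G τ → τ = σ) ∧ IsStrictEq G σ} := by
  classical
  rw [isOpen_iff_mem_nhds]
  rintro G₀ ⟨σ, hNash₀, huniq₀, s, rfl, hstrict₀⟩
  set W : Set (Game m × (∀ j, Fin (m j) → ℝ)) :=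
    {p | ∀ (i : Fin n) (t : Fin (m i)), t ≠ s i →
      devPayoff p.1 i p.2 t < devPayoff p.1 i p.2 (s i)} with hW
  have hWopen : IsOpen W := by
    have heq : W = ⋂ i, ⋂ t, {p : Game m × (∀ j, Fin (m j) → ℝ) |
        t ≠ s i → devPayoff p.1 i p.2 t < devPayoff p.1 i p.2 (s i)} := by
      ext p; simp only [hW, Set.mem_setOf_eq, Set.mem_iInter]
    rw [heq]
    refine isOpen_iInter_of_finite fun i => isOpen_iInter_of_finite fun t => ?_
    rcases eq_or_ne t (s i) with rfl | ht
    · have : {p : Game m × (∀ j, Fin (m j) → ℝ) |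
          s i ≠ s i → devPayoff p.1 i p.2 (s i) < devPayoff p.1 i p.2 (s i)} = Set.univ := by
        ext p; simp
      rw [this]; exact isOpen_univ
    · have : {p : Game m × (∀ j, Fin (m j) → ℝ) |
          t ≠ s i → devPayoff p.1 i p.2 t < devPayoff p.1 i p.2 (s i)}
          = {p | devPayoff p.1 i p.2 t < devPayoff p.1 i p.2 (s i)} := by
        ext p; simp [ht]
      rw [this]
      exact isOpen_lt (continuous_devPayoff i t) (continuous_devPayoff i (s i))
  have hWmem : (G₀, fun j => pureStrat (s j)) ∈ W := by
    intro i t ht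
    simp only
    rw [devPayoff_pure, devPayoff_pure, Function.update_eq_self]
    exact hstrict₀ i t ht
  obtain ⟨U, V, hUopen, hGU, hVopen, hPV, hUV⟩ :=
    mem_nhds_prod_iff'.mp (hWopen.mem_nhds hWmem)
  have hKcomp : IsCompact ({τ : ∀ j, Fin (m j) → ℝ | IsMixedProfile τ} ∩ Vᶜ) :=
    IsCompact.inter_right isCompact_mixedProfiles hVopen.isClosed_compl
  have h1 : ∀ τ ∈ {τ : ∀ j, Fin (m j) → ℝ | IsMixedProfile τ} ∩ Vᶜ,
      ∀ᶠ p : Game m × (∀ j, Fin (m j) → ℝ) in 𝓝 (G₀, τ),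
        ∃ i t, mixedPayoff p.1 i p.2 < devPayoff p.1 i p.2 t := by
    rintro τ ⟨hτmix, hτV⟩
    have hnotnash : ¬ IsNash G₀ τ := fun h => hτV (by rw [huniq₀ τ h]; exact hPV)
    have hex : ∃ i t, mixedPayoff G₀ i τ < devPayoff G₀ i τ t := by
      by_contra hc
      push_neg at hc
      exact hnotnash ⟨hτmix, fun i t => hc i t⟩
    obtain ⟨i, t, hit⟩ := hex
    have hopen : IsOpen {p : Game m × (∀ j, Fin (m j) → ℝ) |
        mixedPayoff p.1 i p.2 < devPayoff p.1 i p.2 t} :=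
      isOpen_lt (continuous_mixedPayoff i) (continuous_devPayoff i t)
    exact Filter.eventually_of_mem (hopen.mem_nhds hit) fun p hp => ⟨i, t, hp⟩
  have h2 : ∀ᶠ G : Game m in 𝓝 G₀, ∀ τ ∈ {τ : ∀ j, Fin (m j) → ℝ | IsMixedProfile τ} ∩ Vᶜ,
      ∃ i t, mixedPayoff G i τ < devPayoff G i τ t :=
    hKcomp.eventually_forall_of_forall_eventually
      (P := fun G τ => ∃ i t, mixedPayoff G i τ < devPayoff G i τ t) h1
  have h3 : ∀ᶠ G : Game m in 𝓝 G₀,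
      ∀ (i : Fin n) (t : Fin (m i)), t ≠ s i → G i (Function.update s i t) < G i s := by
    rw [eventually_all]
    intro i
    rw [eventually_all]
    intro t
    rcases eq_or_ne t (s i) with rfl | ht
    · exact Filter.Eventually.of_forall fun G h => absurd rfl h
    · refine Filter.Eventually.mono ?_ fun G h _ => h
      exact ContinuousAt.eventually_lt
        (f := fun G : Game m => G i (Function.update s i t))
        (g := fun G : Game m => G i s)
        (((continuous_apply (Function.update s i t)).comp (continuous_apply i)).continuousAt)
        (((continuous_apply s).comp (continuous_apply i)).continuousAt)
        (hstrict₀ i t ht)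
  filter_upwards [h2, h3, hUopen.mem_nhds hGU] with G hfar hstr hGU'
  refine ⟨fun j => pureStrat (s j), nash_of_strict hstr, ?_, ⟨s, rfl, hstr⟩⟩
  intro τ hτ
  by_cases hV : τ ∈ V
  · have hw : (G, τ) ∈ W := hUV ⟨hGU', hV⟩
    funext i
    exact nash_support hτ i (s i) (fun t ht => hw i t ht)
  · obtain ⟨i, t, hit⟩ := hfar τ ⟨hτ.1, hV⟩
    exact absurd (hτ.2 i t) (not_le.mpr hit)
end

section
/- Within the set of symmetric bimatrix games with a fixed finite strategy set T, the set of games having a unique symmetric Nash equilibrium such that this symmetric Nash equilibrium is quasi-strict is open (in the topology on symmetric games induced by identification with ℝ^{|T|×|T|}). -/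
/-- A mixed strategy: a probability distribution on the strategy set. -/
def IsMixed {k : ℕ} (x : Fin k → ℝ) : Prop := (∀ a, 0 ≤ x a) ∧ ∑ a, x a = 1

/-- Bilinear payoff: the expected payoff `∑ₐ ∑_b x a * y b * A a b` to a player with payoff
matrix `A` when the row strategy is `x` and the column strategy is `y`. -/
def pay {k : ℕ} (A : Fin k → Fin k → ℝ) (x y : Fin k → ℝ) : ℝ :=
  ∑ a, ∑ b, x a * y b * A a b

/-- `σ` is a symmetric Nash equilibrium of the symmetric bimatrix game with row-player
payoff matrix `A` (the column player having matrix `Aᵀ`): `(σ, σ)` is a Nash equilibrium,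
i.e. no pure deviation of either player is profitable. -/
def IsSymNash {k : ℕ} (A : Fin k → Fin k → ℝ) (σ : Fin k → ℝ) : Prop :=
  IsMixed σ ∧ (∀ a, pay A (pureStrat a) σ ≤ pay A σ σ) ∧
    (∀ b, pay (fun s t => A t s) σ (pureStrat b) ≤ pay (fun s t => A t s) σ σ)

/-- The symmetric equilibrium `(σ, σ)` is quasi-strict: for each player, every pure best
response to the opponent's strategy `σ` lies in the support of `σ`. -/
def SymQuasiStrict {k : ℕ} (A : Fin k → Fin k → ℝ) (σ : Fin k → ℝ) : Prop :=
  (∀ a, (∀ b, pay A (pureStrat b) σ ≤ pay A (pureStrat a) σ) → 0 < σ a) ∧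
  (∀ a, (∀ b, pay (fun s t => A t s) σ (pureStrat b) ≤
      pay (fun s t => A t s) σ (pureStrat a)) → 0 < σ a)

open Topology Filter

section Aux

variable {k : ℕ}

/-- The marginal payoff vector: `gfun A x a = (A x)ₐ`. -/
def gfun (A : Fin k → Fin k → ℝ) (x : Fin k → ℝ) (a : Fin k) : ℝ := ∑ b, x b * A a b

lemma pay_pure_left (A : Fin k → Fin k → ℝ) (σ : Fin k → ℝ) (a : Fin k) :
    pay A (pureStrat a) σ = gfun A σ a := by
  simp [pay, pureStrat, gfun, ite_mul, zero_mul, one_mul]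

lemma pay_pure_right_tr (A : Fin k → Fin k → ℝ) (σ : Fin k → ℝ) (b : Fin k) :
    pay (fun s t => A t s) σ (pureStrat b) = gfun A σ b := by
  rw [pay, Finset.sum_comm]
  simp [pureStrat, gfun, ite_mul, mul_ite, zero_mul, mul_zero, mul_comm]

lemma pay_tr (A : Fin k → Fin k → ℝ) (σ : Fin k → ℝ) :
    pay (fun s t => A t s) σ σ = pay A σ σ := by
  rw [pay, Finset.sum_comm, pay]
  congr 1; ext a; congr 1; ext b; ring

lemma pay_eq (A : Fin k → Fin k → ℝ) (x y : Fin k → ℝ) :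
    pay A x y = ∑ a, x a * gfun A y a := by
  unfold pay gfun
  congr 1; ext a; rw [Finset.mul_sum]; congr 1; ext b; ring

lemma isSymNash_iff (A : Fin k → Fin k → ℝ) (σ : Fin k → ℝ) :
    IsSymNash A σ ↔ IsMixed σ ∧ ∀ a, gfun A σ a ≤ pay A σ σ := by
  unfold IsSymNash
  simp only [pay_pure_left, pay_pure_right_tr, pay_tr, and_self_iff]

lemma symQuasiStrict_iff (A : Fin k → Fin k → ℝ) (σ : Fin k → ℝ) :
    SymQuasiStrict A σ ↔ ∀ a, (∀ b, gfun A σ b ≤ gfun A σ a) → 0 < σ a := by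
  unfold SymQuasiStrict
  simp only [pay_pure_left, pay_pure_right_tr, and_self_iff]

/-- On the support of a symmetric Nash equilibrium, the payoff equals the value. -/
lemma gfun_eq_of_mem_support {A : Fin k → Fin k → ℝ} {σ : Fin k → ℝ}
    (h : IsSymNash A σ) {a : Fin k} (ha : 0 < σ a) : gfun A σ a = pay A σ σ := by
  rcases (isSymNash_iff A σ).1 h with ⟨⟨hnn, hsum⟩, hle⟩
  by_contra hne
  have hlt : gfun A σ a < pay A σ σ := lt_of_le_of_ne (hle a) hne
  have : pay A σ σ < pay A σ σ := by
    calc pay A σ σ = ∑ b, σ b * gfun A σ b := pay_eq A σ σ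
    _ < ∑ b, σ b * pay A σ σ := by
        apply Finset.sum_lt_sum
        · intro b _; exact mul_le_mul_of_nonneg_left (hle b) (hnn b)
        · exact ⟨a, Finset.mem_univ a, by nlinarith⟩
    _ = pay A σ σ := by rw [← Finset.sum_mul, hsum, one_mul]
  exact lt_irrefl _ this

lemma gfun_add_smul (A : Fin k → Fin k → ℝ) (x y : Fin k → ℝ) (t : ℝ) (a : Fin k) :
    gfun A (fun b => x b + t * y b) a = gfun A x a + t * gfun A y a := by
  unfold gfun
  rw [Finset.mul_sum, ← Finset.sum_add_distrib]
  exact Finset.sum_congr rfl fun b _ => by ring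

lemma continuous_gfun (a : Fin k) :
    Continuous fun p : (Fin k → Fin k → ℝ) × (Fin k → ℝ) => gfun p.1 p.2 a := by
  unfold gfun
  refine continuous_finset_sum _ fun b _ => Continuous.mul ?_ ?_
  · exact (continuous_apply b).comp continuous_snd
  · exact (continuous_apply b).comp ((continuous_apply a).comp continuous_fst)

lemma continuous_pay :
    Continuous fun p : (Fin k → Fin k → ℝ) × (Fin k → ℝ) => pay p.1 p.2 p.2 := by
  unfold pay
  refine continuous_finset_sum _ fun a _ => continuous_finset_sum _ fun b _ => ?_
  refine Continuous.mul (Continuous.mul ?_ ?_) ?_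
  · exact (continuous_apply a).comp continuous_snd
  · exact (continuous_apply b).comp continuous_snd
  · exact (continuous_apply b).comp ((continuous_apply a).comp continuous_fst)

lemma norm_le_one_of_mixed {τ : Fin k → ℝ} (h : IsMixed τ) : ‖τ‖ ≤ 1 := by
  rw [pi_norm_le_iff_of_nonneg zero_le_one]
  intro a
  rw [Real.norm_eq_abs, abs_le]
  constructor
  · linarith [h.1 a]
  · calc τ a ≤ ∑ b, τ b := Finset.single_le_sum (fun b _ => h.1 b) (Finset.mem_univ a)
    _ = 1 := h.2

/-- The linear system whose solution is the equilibrium with support `C`. -/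
def Lmap (C : Finset (Fin k)) (A : Fin k → Fin k → ℝ) :
    ((Fin k → ℝ) × ℝ) →ₗ[ℝ] ((Fin k → ℝ) × ℝ) where
  toFun z := (fun a => if a ∈ C then gfun A z.1 a - z.2 else z.1 a, ∑ a, z.1 a)
  map_add' z w := by
    ext a
    · simp only [Prod.fst_add, Pi.add_apply, Prod.snd_add, gfun]
      split_ifs
      · rw [show (∑ b, z.1 b * A a b - z.2 + (∑ b, w.1 b * A a b - w.2))
            = (∑ b, z.1 b * A a b + ∑ b, w.1 b * A a b) - (z.2 + w.2) by ring,
            ← Finset.sum_add_distrib]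
        congr 1
        exact Finset.sum_congr rfl fun b _ => by ring
      · rfl
    · simp only [Prod.snd_add, Prod.fst_add]
      exact Finset.sum_add_distrib
  map_smul' c z := by
    ext a
    · simp only [Prod.smul_fst, Pi.smul_apply, smul_eq_mul, RingHom.id_apply, Prod.smul_snd, gfun]
      split_ifs
      · rw [mul_sub, Finset.mul_sum]
        congr 1
        exact Finset.sum_congr rfl fun b _ => by ring
      · rfl
    · simp only [Prod.smul_fst, RingHom.id_apply, Prod.smul_snd, smul_eq_mul, Finset.mul_sum]
      exact Finset.sum_congr rfl fun b _ => by simp [mul_comm]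

lemma Lmap_apply (C : Finset (Fin k)) (A : Fin k → Fin k → ℝ) (z : (Fin k → ℝ) × ℝ) :
    Lmap C A z = (fun a => if a ∈ C then gfun A z.1 a - z.2 else z.1 a, ∑ a, z.1 a) := rfl

lemma Lmap_diff_bound (C : Finset (Fin k)) (A B : Fin k → Fin k → ℝ) (z : (Fin k → ℝ) × ℝ) :
    ‖Lmap C A z - Lmap C B z‖ ≤ k * dist A B * ‖z‖ := by
  have hnn : (0:ℝ) ≤ k * dist A B * ‖z‖ := by positivity
  have key : ∀ a : Fin k, |gfun A z.1 a - gfun B z.1 a| ≤ k * dist A B * ‖z‖ := by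
    intro a
    have : gfun A z.1 a - gfun B z.1 a = ∑ b, z.1 b * (A a b - B a b) := by
      rw [gfun, gfun, ← Finset.sum_sub_distrib]
      exact Finset.sum_congr rfl fun b _ => by ring
    rw [this]
    calc |∑ b, z.1 b * (A a b - B a b)| ≤ ∑ b, |z.1 b * (A a b - B a b)| :=
          Finset.abs_sum_le_sum_abs _ _
    _ ≤ ∑ _b : Fin k, ‖z‖ * dist A B := by
        refine Finset.sum_le_sum fun b _ => ?_
        rw [abs_mul]
        refine mul_le_mul ?_ ?_ (abs_nonneg _) (norm_nonneg _)
        · exact le_trans (norm_le_pi_norm z.1 b) (norm_fst_le z)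
        · have h1 : dist (A a b) (B a b) ≤ dist (A a) (B a) := dist_le_pi_dist (A a) (B a) b
          have h2 : dist (A a) (B a) ≤ dist A B := dist_le_pi_dist A B a
          rw [Real.dist_eq] at h1
          linarith
    _ = k * dist A B * ‖z‖ := by
        rw [Finset.sum_const, Finset.card_univ, Fintype.card_fin, nsmul_eq_mul]; ring
  rw [Prod.norm_def]
  apply max_le
  · rw [pi_norm_le_iff_of_nonneg hnn]
    intro a
    simp only [Lmap_apply, Prod.fst_sub, Pi.sub_apply, Real.norm_eq_abs]
    split_ifs with h
    · have := key a
      rw [show gfun A z.1 a - z.2 - (gfun B z.1 a - z.2) = gfun A z.1 a - gfun B z.1 a by ring]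
      exact this
    · simpa using hnn
  · simp only [Lmap_apply, Prod.snd_sub, sub_self, norm_zero]
    exact hnn

end Aux
set_option maxHeartbeats 1000000 in
/-- within the set of symmetric bimatrix games with strategy set `Fin k`
(identified with `ℝ^(k × k)`), the set of games having a unique symmetric Nash equilibrium,
this equilibrium moreover being quasi-strict, is open. -/
theorem statement8 (k : ℕ) (hk : 0 < k) :
    IsOpen {A : Fin k → Fin k → ℝ | ∃ σ : Fin k → ℝ,
      IsSymNash A σ ∧ (∀ τ, IsSymNash A τ → τ = σ) ∧ SymQuasiStrict A σ} := by
  rw [isOpen_iff_mem_nhds]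
  rintro A₀ ⟨σ₀, h0, huniq, hqs0⟩
  obtain ⟨hmix0, hle0⟩ := (isSymNash_iff A₀ σ₀).1 h0
  have hqs := (symQuasiStrict_iff A₀ σ₀).1 hqs0
  set C : Finset (Fin k) := Finset.univ.filter (fun a => 0 < σ₀ a) with hCdef
  have memC : ∀ a, a ∈ C ↔ 0 < σ₀ a := fun a => by simp [hCdef]
  set v₀ : ℝ := pay A₀ σ₀ σ₀ with hv₀
  have hgC : ∀ a ∈ C, gfun A₀ σ₀ a = v₀ := fun a ha =>
    gfun_eq_of_mem_support h0 ((memC a).1 ha)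
  have hgNC : ∀ a ∉ C, gfun A₀ σ₀ a < v₀ := by
    intro a ha
    rcases lt_or_eq_of_le (hle0 a) with h | h
    · exact h
    · exact absurd ((memC a).2 (hqs a (fun b => by rw [h]; exact hle0 b))) ha
  have hNC0 : ∀ a ∉ C, σ₀ a = 0 := by
    intro a ha
    by_contra hne
    exact ha ((memC a).2 (lt_of_le_of_ne (hmix0.1 a) (Ne.symm hne)))
  have hCne : C.Nonempty := by
    by_contra h
    rw [Finset.not_nonempty_iff_eq_empty] at h
    have hz : ∑ a, σ₀ a = 0 := Finset.sum_eq_zero fun a _ =>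
      hNC0 a (by rw [h]; exact Finset.notMem_empty a)
    rw [hmix0.2] at hz; norm_num at hz
  set z₀ : (Fin k → ℝ) × ℝ := (σ₀, v₀) with hz₀def
  have hLz₀ : Lmap C A₀ z₀ = (0, 1) := by
    refine Prod.ext (funext fun a => ?_) hmix0.2
    show (if a ∈ C then gfun A₀ σ₀ a - v₀ else σ₀ a) = 0
    split_ifs with h
    · rw [hgC a h]; ring
    · exact hNC0 a h
  -- injectivity of the linear system at A₀
  have hker : ∀ z, Lmap C A₀ z = 0 → z = 0 := by
    intro z hz
    have hx0 : ∀ a ∉ C, z.1 a = 0 := by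
      intro a ha
      have h := congrFun (congrArg Prod.fst hz) a
      simpa [Lmap_apply, ha] using h
    have hgx : ∀ a ∈ C, gfun A₀ z.1 a = z.2 := by
      intro a ha
      have h := congrFun (congrArg Prod.fst hz) a
      simp only [Lmap_apply, ha, if_pos] at h
      have h' : gfun A₀ z.1 a - z.2 = 0 := h
      linarith
    have hsx : ∑ a, z.1 a = 0 := congrArg Prod.snd hz
    have hev : ∀ᶠ t in 𝓝 (0:ℝ), ∀ a : Fin k,
        (a ∈ C → 0 < σ₀ a + t * z.1 a) ∧
        (a ∉ C → gfun A₀ σ₀ a + t * gfun A₀ z.1 a < v₀ + t * z.2) := by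
      rw [Filter.eventually_all]
      intro a
      refine Filter.Eventually.and ?_ ?_
      · by_cases h : a ∈ C
        · have hc : Continuous fun t : ℝ => σ₀ a + t * z.1 a := by
            exact continuous_const.add (continuous_id.mul continuous_const)
          have h0' : (0:ℝ) < σ₀ a + 0 * z.1 a := by simpa using (memC a).1 h
          filter_upwards [(hc.tendsto 0).eventually (eventually_gt_nhds h0')] with t ht
          exact fun _ => ht
        · exact Filter.Eventually.of_forall fun t h' => absurd h' h
      · by_cases h : a ∈ C
        · exact Filter.Eventually.of_forall fun t h' => absurd h h'
        · have hf : Filter.Tendsto (fun t : ℝ => gfun A₀ σ₀ a + t * gfun A₀ z.1 a)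
              (𝓝 0) (𝓝 (gfun A₀ σ₀ a)) := by
            have hc : Continuous fun t : ℝ => gfun A₀ σ₀ a + t * gfun A₀ z.1 a :=
              continuous_const.add (continuous_id.mul continuous_const)
            simpa using hc.tendsto 0
          have hg : Filter.Tendsto (fun t : ℝ => v₀ + t * z.2) (𝓝 0) (𝓝 v₀) := by
            have hc : Continuous fun t : ℝ => v₀ + t * z.2 :=
              continuous_const.add (continuous_id.mul continuous_const)
            simpa using hc.tendsto 0
          filter_upwards [hf.eventually_lt hg (hgNC a h)] with t ht
          exact fun _ => ht
    obtain ⟨t, htprop, htm⟩ :=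
      ((hev.filter_mono (nhdsWithin_le_nhds (s := Set.Ioi (0:ℝ)))).and
        self_mem_nhdsWithin).exists
    have htpos : 0 < t := htm
    set τ : Fin k → ℝ := fun b => σ₀ b + t * z.1 b with hτdef
    have hτNC : ∀ a ∉ C, τ a = 0 := fun a ha => by
      simp [hτdef, hNC0 a ha, hx0 a ha]
    have hgτ : ∀ a, gfun A₀ τ a = gfun A₀ σ₀ a + t * gfun A₀ z.1 a := fun a =>
      gfun_add_smul A₀ σ₀ z.1 t a
    have hτC : ∀ a ∈ C, gfun A₀ τ a = v₀ + t * z.2 := fun a ha => by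
      rw [hgτ, hgC a ha, hgx a ha]
    have hτmix : IsMixed τ := by
      constructor
      · intro a
        by_cases h : a ∈ C
        · exact le_of_lt ((htprop a).1 h)
        · rw [hτNC a h]
      · have : ∑ a, τ a = ∑ a, σ₀ a + t * ∑ a, z.1 a := by
          rw [Finset.mul_sum, ← Finset.sum_add_distrib]
        rw [this, hmix0.2, hsx]; ring
    have hpayτ : pay A₀ τ τ = v₀ + t * z.2 := by
      rw [pay_eq]
      have heach : ∀ a : Fin k, τ a * gfun A₀ τ a = τ a * (v₀ + t * z.2) := by
        intro a
        by_cases h : a ∈ C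
        · rw [hτC a h]
        · rw [hτNC a h]; ring
      rw [Finset.sum_congr rfl (fun a _ => heach a), ← Finset.sum_mul, hτmix.2, one_mul]
    have hτNE : IsSymNash A₀ τ := by
      refine (isSymNash_iff _ _).2 ⟨hτmix, fun a => ?_⟩
      rw [hpayτ]
      by_cases h : a ∈ C
      · exact le_of_eq (hτC a h)
      · rw [hgτ]; exact le_of_lt ((htprop a).2 h)
    have hτeq : τ = σ₀ := huniq τ hτNE
    have hx : z.1 = 0 := by
      funext a
      have h := congrFun hτeq a
      simp only [hτdef] at h
      have : t * z.1 a = 0 := by linarith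
      rcases mul_eq_zero.1 this with h' | h'
      · exact absurd h' (ne_of_gt htpos)
      · exact h'
    have hw : z.2 = 0 := by
      obtain ⟨a₀, ha₀⟩ := hCne
      have h := hgx a₀ ha₀
      rw [hx] at h
      simpa [gfun] using h.symm
    exact Prod.ext hx hw
  have hinj : Function.Injective (Lmap C A₀) := by
    intro z₁ z₂ h
    have := hker (z₁ - z₂) (by rw [map_sub, h, sub_self])
    exact sub_eq_zero.mp this
  have hsurj : Function.Surjective (Lmap C A₀) :=
    LinearMap.injective_iff_surjective.1 hinj
  let e : ((Fin k → ℝ) × ℝ) ≃ₗ[ℝ] ((Fin k → ℝ) × ℝ) :=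
    LinearEquiv.ofBijective _ ⟨hinj, hsurj⟩
  let e' := e.toContinuousLinearEquiv
  set c : ℝ := ‖(e'.symm : ((Fin k → ℝ) × ℝ) →L[ℝ] ((Fin k → ℝ) × ℝ))‖ with hcdef
  have hcnn : 0 ≤ c := norm_nonneg _
  have hc : ∀ z, ‖z‖ ≤ c * ‖Lmap C A₀ z‖ := by
    intro z
    have h2 : e' z = Lmap C A₀ z := by
      show e'.toLinearEquiv z = _
      rfl
    have h1 : e'.symm (e' z) = z := e'.symm_apply_apply z
    have h3 := (e'.symm : ((Fin k → ℝ) × ℝ) →L[ℝ] ((Fin k → ℝ) × ℝ)).le_opNorm (e' z)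
    rw [ContinuousLinearEquiv.coe_coe, h1, h2] at h3
    exact h3
  set δ₀ : ℝ := 1 / (2 * ((k:ℝ)+1) * (c+1)) with hδ₀def
  have hδ₀pos : 0 < δ₀ := by positivity
  have hhalf : ∀ A : Fin k → Fin k → ℝ, dist A A₀ < δ₀ →
      c * ((k:ℝ) * dist A A₀) ≤ 1/2 := by
    intro A hA
    have hd : (0:ℝ) ≤ dist A A₀ := dist_nonneg
    have hkk : (0:ℝ) ≤ (k:ℝ) := Nat.cast_nonneg k
    have heq : ((k:ℝ)+1) * (c+1) * δ₀ = 1/2 := by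
      rw [hδ₀def]; field_simp
    have h1 : c * ((k:ℝ) * dist A A₀) ≤ c * ((k:ℝ) * δ₀) := by
      nlinarith [mul_nonneg (mul_nonneg hcnn hkk) (sub_nonneg.2 hA.le)]
    have h2 : c * ((k:ℝ) * δ₀) ≤ ((k:ℝ)+1) * (c+1) * δ₀ := by
      nlinarith [mul_nonneg (by linarith : (0:ℝ) ≤ (k:ℝ)+c+1) hδ₀pos.le]
    linarith
  have hinjA : ∀ A : Fin k → Fin k → ℝ, dist A A₀ < δ₀ →
      ∀ z₁ z₂, Lmap C A z₁ = Lmap C A z₂ → z₁ = z₂ := by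
    intro A hA z₁ z₂ hz
    have hz0 : Lmap C A (z₁ - z₂) = 0 := by rw [map_sub, hz, sub_self]
    set z := z₁ - z₂ with hzz
    have h1 : ‖z‖ ≤ c * ‖Lmap C A₀ z‖ := hc z
    have h2 : ‖Lmap C A₀ z‖ = ‖Lmap C A z - Lmap C A₀ z‖ := by
      rw [hz0, zero_sub, norm_neg]
    have h3 : ‖Lmap C A z - Lmap C A₀ z‖ ≤ k * dist A A₀ * ‖z‖ :=
      Lmap_diff_bound C A A₀ z
    have h4 : c * ((k:ℝ) * dist A A₀) ≤ 1/2 := hhalf A hA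
    have h5 : ‖z‖ ≤ (1/2) * ‖z‖ := by
      have hznn : (0:ℝ) ≤ ‖z‖ := norm_nonneg z
      nlinarith
    have : ‖z‖ = 0 := by nlinarith [norm_nonneg z]
    exact sub_eq_zero.mp (norm_eq_zero.mp this)
  classical
  set zfun : (Fin k → Fin k → ℝ) → (Fin k → ℝ) × ℝ := fun A =>
    if h : ∃ w, Lmap C A w = ((0 : Fin k → ℝ), (1:ℝ)) then h.choose else 0 with hzfdef
  have hzfun : ∀ A, dist A A₀ < δ₀ → Lmap C A (zfun A) = (0, 1) := by
    intro A hA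
    have hsurjA : Function.Surjective (Lmap C A) :=
      LinearMap.injective_iff_surjective.1 (fun z₁ z₂ h => hinjA A hA z₁ z₂ h)
    have hex : ∃ w, Lmap C A w = ((0 : Fin k → ℝ), (1:ℝ)) := hsurjA (0, 1)
    simp only [hzfdef, dif_pos hex]
    exact hex.choose_spec
  have hzbound : ∀ A, dist A A₀ < δ₀ →
      ‖zfun A - z₀‖ ≤ 2 * c * k * ‖z₀‖ * dist A A₀ := by
    intro A hA
    set z := zfun A with hzA
    have h1 : ‖z - z₀‖ ≤ c * ‖Lmap C A₀ (z - z₀)‖ := hc _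
    have h2 : Lmap C A₀ (z - z₀) = Lmap C A₀ z - Lmap C A z := by
      rw [map_sub, hLz₀, ← hzfun A hA]
    have h3 : ‖Lmap C A₀ z - Lmap C A z‖ ≤ k * dist A A₀ * ‖z‖ := by
      rw [norm_sub_rev]; exact Lmap_diff_bound C A A₀ z
    have h4 : c * ((k:ℝ) * dist A A₀) ≤ 1/2 := hhalf A hA
    have h5 : ‖z - z₀‖ ≤ c * ((k:ℝ) * dist A A₀) * ‖z‖ := by
      rw [h2] at h1
      nlinarith [norm_nonneg z, hcnn, dist_nonneg (x := A) (y := A₀)]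
    have h6 : ‖z‖ ≤ ‖z - z₀‖ + ‖z₀‖ := by
      calc ‖z‖ = ‖z - z₀ + z₀‖ := by ring_nf
      _ ≤ ‖z - z₀‖ + ‖z₀‖ := norm_add_le _ _
    have h4' : c * ((k:ℝ) * dist A A₀) * ‖z‖ ≤ (1/2) * ‖z‖ :=
      mul_le_mul_of_nonneg_right h4 (norm_nonneg z)
    have h7 : ‖z - z₀‖ ≤ ‖z₀‖ := by linarith
    have h8 : ‖z‖ ≤ 2 * ‖z₀‖ := by linarith
    have h9 : c * ((k:ℝ) * dist A A₀) * ‖z‖ ≤ c * ((k:ℝ) * dist A A₀) * (2 * ‖z₀‖) :=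
      mul_le_mul_of_nonneg_left h8 (by positivity)
    calc ‖z - z₀‖ ≤ c * ((k:ℝ) * dist A A₀) * ‖z‖ := h5
    _ ≤ c * ((k:ℝ) * dist A A₀) * (2 * ‖z₀‖) := h9
    _ = 2 * c * k * ‖z₀‖ * dist A A₀ := by ring
  have htend : Filter.Tendsto zfun (𝓝 A₀) (𝓝 z₀) := by
    rw [tendsto_iff_dist_tendsto_zero]
    have hgt : Filter.Tendsto (fun A : Fin k → Fin k → ℝ => 2 * c * (k:ℝ) * ‖z₀‖ * dist A A₀)
        (𝓝 A₀) (𝓝 0) := by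
      have hcont : Continuous fun A : Fin k → Fin k → ℝ =>
          2 * c * (k:ℝ) * ‖z₀‖ * dist A A₀ :=
        continuous_const.mul (continuous_id.dist continuous_const)
      have h := hcont.tendsto A₀
      simpa using h
    refine squeeze_zero' (Filter.Eventually.of_forall fun A => dist_nonneg) ?_ hgt
    filter_upwards [Metric.ball_mem_nhds A₀ hδ₀pos] with A hA
    rw [dist_eq_norm]
    exact hzbound A (Metric.mem_ball.1 hA)
    -- the open set W of pairs (A, τ)
  set W : Set ((Fin k → Fin k → ℝ) × (Fin k → ℝ)) :=
    {p | (∀ a ∈ C, 0 < p.2 a) ∧ ∀ a ∉ C, gfun p.1 p.2 a < pay p.1 p.2 p.2} with hWdef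
  have hWopen : IsOpen W := by
    have hWeq : W = ⋂ a : Fin k,
        (if a ∈ C then {p : (Fin k → Fin k → ℝ) × (Fin k → ℝ) | 0 < p.2 a}
        else {p | gfun p.1 p.2 a < pay p.1 p.2 p.2}) := by
      ext p
      simp only [hWdef, Set.mem_setOf_eq, Set.mem_iInter]
      constructor
      · rintro ⟨h1, h2⟩ a
        by_cases h : a ∈ C
        · rw [if_pos h]; exact h1 a h
        · rw [if_neg h]; exact h2 a h
      · intro h
        constructor
        · intro a ha; have := h a; rwa [if_pos ha] at this
        · intro a ha; have := h a; rwa [if_neg ha] at this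
    rw [hWeq]
    refine isOpen_iInter_of_finite fun a => ?_
    by_cases h : a ∈ C
    · rw [if_pos h]
      exact isOpen_lt continuous_const ((continuous_apply a).comp continuous_snd)
    · rw [if_neg h]
      exact isOpen_lt (continuous_gfun a) continuous_pay
  have hW0 : (A₀, σ₀) ∈ W := ⟨fun a ha => (memC a).1 ha, fun a ha => hgNC a ha⟩
  obtain ⟨ε', hε'pos, hball⟩ := Metric.isOpen_iff.1 hWopen (A₀, σ₀) hW0
  -- closedness of the symmetric-Nash set
  have hNEclosed : IsClosed {p : (Fin k → Fin k → ℝ) × (Fin k → ℝ) | IsSymNash p.1 p.2} := by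
    have heq : {p : (Fin k → Fin k → ℝ) × (Fin k → ℝ) | IsSymNash p.1 p.2} =
        ((⋂ a : Fin k, {p : (Fin k → Fin k → ℝ) × (Fin k → ℝ) | 0 ≤ p.2 a}) ∩
          {p | ∑ a, p.2 a = 1}) ∩
          ⋂ a : Fin k, {p | gfun p.1 p.2 a ≤ pay p.1 p.2 p.2} := by
      ext p
      simp only [Set.mem_setOf_eq, Set.mem_inter_iff, Set.mem_iInter, isSymNash_iff, IsMixed]
    rw [heq]
    refine IsClosed.inter (IsClosed.inter ?_ ?_) ?_
    · exact isClosed_iInter fun a =>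
        isClosed_le continuous_const ((continuous_apply a).comp continuous_snd)
    · exact isClosed_eq
        (continuous_finset_sum _ fun a _ => (continuous_apply a).comp continuous_snd)
        continuous_const
    · exact isClosed_iInter fun a => isClosed_le (continuous_gfun a) continuous_pay
  -- upper hemicontinuity of the symmetric-Nash correspondence at A₀
  have hU : ∀ᶠ A in 𝓝 A₀, ∀ τ, IsSymNash A τ → dist τ σ₀ < ε' := by
    set KK : Set ((Fin k → Fin k → ℝ) × (Fin k → ℝ)) :=
      {p | IsSymNash p.1 p.2} ∩ {p | dist p.1 A₀ ≤ 1} ∩ {p | ε' ≤ dist p.2 σ₀} with hKKdef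
    have hKclosed : IsClosed KK := by
      refine IsClosed.inter (IsClosed.inter hNEclosed ?_) ?_
      · exact isClosed_le (continuous_fst.dist continuous_const) continuous_const
      · exact isClosed_le continuous_const (continuous_snd.dist continuous_const)
    have hKsub : KK ⊆ (Metric.closedBall A₀ 1) ×ˢ (Metric.closedBall (0 : Fin k → ℝ) 1) := by
      rintro p ⟨⟨hNE, hd⟩, -⟩
      refine ⟨Metric.mem_closedBall.2 hd, Metric.mem_closedBall.2 ?_⟩
      rw [dist_zero_right]
      exact norm_le_one_of_mixed hNE.1
    have hKcomp : IsCompact KK :=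
      Metric.isCompact_of_isClosed_isBounded hKclosed
        ((Metric.isBounded_closedBall.prod Metric.isBounded_closedBall).subset hKsub)
    rcases KK.eq_empty_or_nonempty with hKe | hKne
    · filter_upwards [Metric.ball_mem_nhds A₀ one_pos] with A hA τ hτ
      by_contra hge
      push_neg at hge
      have hmem : (A, τ) ∈ KK := ⟨⟨hτ, (Metric.mem_ball.1 hA).le⟩, hge⟩
      rw [hKe] at hmem
      exact hmem
    · obtain ⟨p, hpK, hpmin⟩ := hKcomp.exists_isMinOn hKne
        ((continuous_fst.dist continuous_const).continuousOn)
      have hδ₁pos : 0 < dist p.1 A₀ := by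
        rcases (dist_nonneg (x := p.1) (y := A₀)).lt_or_eq with h | h
        · exact h
        · exfalso
          have hp1 : p.1 = A₀ := eq_of_dist_eq_zero h.symm
          have hNE0 : IsSymNash p.1 p.2 := hpK.1.1
          rw [hp1] at hNE0
          have hteq := huniq p.2 hNE0
          have hdz : dist p.2 σ₀ = 0 := by rw [hteq, dist_self]
          have h2 : ε' ≤ dist p.2 σ₀ := hpK.2
          rw [hdz] at h2
          linarith
      filter_upwards [Metric.ball_mem_nhds A₀ (lt_min hδ₁pos one_pos)] with A hA τ hτ
      by_contra hge
      push_neg at hge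
      have hA' := Metric.mem_ball.1 hA
      have hmem : (A, τ) ∈ KK :=
        ⟨⟨hτ, (hA'.trans_le (min_le_right _ _)).le⟩, hge⟩
      have h1 := hpmin hmem
      have h2 : dist A A₀ < dist p.1 A₀ := hA'.trans_le (min_le_left _ _)
      exact absurd h1 (not_le.2 h2)
  have ht1 : Filter.Tendsto (fun A => (zfun A).1) (𝓝 A₀) (𝓝 σ₀) :=
    (continuous_fst.tendsto z₀).comp htend
  have ht2 : Filter.Tendsto (fun A => (zfun A).2) (𝓝 A₀) (𝓝 v₀) :=
    (continuous_snd.tendsto z₀).comp htend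
  have hE2 : ∀ᶠ A in 𝓝 A₀, ∀ a, a ∈ C → 0 < (zfun A).1 a := by
    rw [Filter.eventually_all]
    intro a
    by_cases h : a ∈ C
    · have hta : Filter.Tendsto (fun A => (zfun A).1 a) (𝓝 A₀) (𝓝 (σ₀ a)) :=
        ((continuous_apply a).tendsto σ₀).comp ht1
      filter_upwards [hta.eventually (eventually_gt_nhds ((memC a).1 h))] with A hA
      exact fun _ => hA
    · exact Filter.Eventually.of_forall fun A h' => absurd h' h
  have hE3 : ∀ᶠ A in 𝓝 A₀, ∀ a, a ∉ C → gfun A (zfun A).1 a < (zfun A).2 := by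
    rw [Filter.eventually_all]
    intro a
    by_cases h : a ∈ C
    · exact Filter.Eventually.of_forall fun A h' => absurd h h'
    · have htg : Filter.Tendsto (fun A => gfun A (zfun A).1 a) (𝓝 A₀) (𝓝 (gfun A₀ σ₀ a)) :=
        ((continuous_gfun a).tendsto (A₀, σ₀)).comp (Filter.tendsto_id.prodMk_nhds ht1)
      filter_upwards [htg.eventually_lt ht2 (hgNC a h)] with A hA
      exact fun _ => hA
  -- final assembly
  filter_upwards [Metric.ball_mem_nhds A₀ hδ₀pos, hE2, hE3,
    Metric.ball_mem_nhds A₀ hε'pos, hU] with A hA1 hA2 hA3 hA4 hA5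
  have hdA : dist A A₀ < δ₀ := Metric.mem_ball.1 hA1
  have heqA := hzfun A hdA
  set σ : Fin k → ℝ := (zfun A).1 with hσdef
  set v : ℝ := (zfun A).2 with hvdef
  have hgv : ∀ a ∈ C, gfun A σ a = v := by
    intro a ha
    have h := congrFun (congrArg Prod.fst heqA) a
    simp only [Lmap_apply, ha, if_pos] at h
    have h' : gfun A σ a - v = 0 := h
    linarith
  have hσ0 : ∀ a ∉ C, σ a = 0 := by
    intro a ha
    have h := congrFun (congrArg Prod.fst heqA) a
    simpa [Lmap_apply, ha] using h
  have hσsum : ∑ a, σ a = 1 := congrArg Prod.snd heqA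
  have hσpos : ∀ a ∈ C, 0 < σ a := fun a ha => hA2 a ha
  have hglt : ∀ a ∉ C, gfun A σ a < v := fun a ha => hA3 a ha
  have hmixσ : IsMixed σ := by
    refine ⟨fun a => ?_, hσsum⟩
    by_cases h : a ∈ C
    · exact (hσpos a h).le
    · rw [hσ0 a h]
  have hpayσ : pay A σ σ = v := by
    rw [pay_eq]
    have heach : ∀ a : Fin k, σ a * gfun A σ a = σ a * v := by
      intro a
      by_cases h : a ∈ C
      · rw [hgv a h]
      · rw [hσ0 a h]; ring
    rw [Finset.sum_congr rfl fun a _ => heach a, ← Finset.sum_mul, hσsum, one_mul]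
  have hNEσ : IsSymNash A σ := by
    refine (isSymNash_iff _ _).2 ⟨hmixσ, fun a => ?_⟩
    rw [hpayσ]
    by_cases h : a ∈ C
    · exact (hgv a h).le
    · exact (hglt a h).le
  refine ⟨σ, hNEσ, ?_, ?_⟩
  · intro τ hτ
    have hdistτ := hA5 τ hτ
    have hWmem : (A, τ) ∈ W := by
      apply hball
      rw [Metric.mem_ball, Prod.dist_eq]
      exact max_lt (Metric.mem_ball.1 hA4) hdistτ
    rw [hWdef, Set.mem_setOf_eq] at hWmem
    obtain ⟨hτpos, hτlt⟩ := hWmem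
    have hτmix : IsMixed τ := hτ.1
    have hτ0 : ∀ a ∉ C, τ a = 0 := by
      intro a ha
      by_contra hne
      have hpos : 0 < τ a := lt_of_le_of_ne (hτmix.1 a) (Ne.symm hne)
      exact absurd (gfun_eq_of_mem_support hτ hpos) (ne_of_lt (hτlt a ha))
    have hLτ : Lmap C A (τ, pay A τ τ) = (0, 1) := by
      refine Prod.ext (funext fun a => ?_) hτmix.2
      show (if a ∈ C then gfun A τ a - pay A τ τ else τ a) = 0
      split_ifs with h
      · rw [gfun_eq_of_mem_support hτ (hτpos a h)]; ring
      · exact hτ0 a h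
    have hfin := hinjA A hdA _ _ (hLτ.trans heqA.symm)
    exact congrArg Prod.fst hfin
  · refine (symQuasiStrict_iff _ _).2 fun a hmax => ?_
    by_cases h : a ∈ C
    · exact hσpos a h
    · exfalso
      obtain ⟨a₀, ha₀⟩ := hCne
      have h1 : v ≤ gfun A σ a := by rw [← hgv a₀ ha₀]; exact hmax a₀
      exact absurd h1 (not_le.2 (hglt a h))
end

section
/- The set of three-player games of size 2×2×2 having a unique Nash equilibrium is not an open subset of the space of three-player 2×2×2 games. A witness is given by the family of games G_ε where player 1 chooses a row in {T,B}, player 2 a column in {L,R}, player 3 a matrix in {W,E}, with payoffs (T,L,W) ↦ (1,1,1), (T,R,W) ↦ (0,1,1), (B,L,W) ↦ (1,1,0), (B,R,W) ↦ (1,0,1), (T,L,E) ↦ (1,0,1−ε), (T,R,E) ↦ (1,1,0), (B,L,E) ↦ (0,1,1), (B,R,E) ↦ (0,0,0): the game G_0 has a unique Nash equilibrium, while for every ε > 0 every mixed profile in which players 2 and 3 play L and W respectively and player 1 plays B with probability less than ε/(1+ε) is a Nash equilibrium of G_ε, so G_ε has infinitely many Nash equilibria. -/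
set_option maxHeartbeats 1000000


/-- The payoff table of the witness family: `eilTbl ε r c w` is the payoff vector
`(U¹, U², U³)` when player 1 plays row `r` (`0` = T, `1` = B), player 2 plays column `c`
(`0` = L, `1` = R) and player 3 plays matrix `w` (`0` = W, `1` = E):
`(T,L,W) ↦ (1,1,1)`, `(T,R,W) ↦ (0,1,1)`, `(B,L,W) ↦ (1,1,0)`, `(B,R,W) ↦ (1,0,1)`,
`(T,L,E) ↦ (1,0,1−ε)`, `(T,R,E) ↦ (1,1,0)`, `(B,L,E) ↦ (0,1,1)`, `(B,R,E) ↦ (0,0,0)`. -/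
noncomputable def eilTbl (ε : ℝ) : Fin 2 → Fin 2 → Fin 2 → Fin 3 → ℝ :=
  ![![![![1, 1, 1], ![1, 0, 1 - ε]], ![![0, 1, 1], ![1, 1, 0]]],
    ![![![1, 1, 0], ![0, 1, 1]], ![![1, 0, 1], ![0, 0, 0]]]]

/-- The witness family `G_ε` of three-player `2 × 2 × 2` games. -/
noncomputable def Gfam (ε : ℝ) : Game (fun _ : Fin 3 => 2) :=
  fun i s => eilTbl ε (s 0) (s 1) (s 2) i

/-- The mixed profile in which player 1 plays `B` with probability `p` (and `T` with
probability `1 − p`) while players 2 and 3 play `L` and `W` respectively. -/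
noncomputable def profB (p : ℝ) : ∀ j : Fin 3, Fin ((fun _ : Fin 3 => 2) j) → ℝ :=
  fun j => if j = 0 then ![1 - p, p] else pureStrat 0

def e3 : (Fin 2 × Fin 2 × Fin 2) ≃ Strat (fun _ : Fin 3 => 2) where
  toFun p := ![p.1, p.2.1, p.2.2]
  invFun s := (s 0, s 1, s 2)
  left_inv := by decide
  right_inv := by decide

lemma sum_strat3 (f : Strat (fun _ : Fin 3 => 2) → ℝ) :
    ∑ s, f s =
      f ![0,0,0] + f ![0,0,1] + f ![0,1,0] + f ![0,1,1] +
      f ![1,0,0] + f ![1,0,1] + f ![1,1,0] + f ![1,1,1] := by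
  rw [← Equiv.sum_comp e3 f]
  simp [Fintype.sum_prod_type, Fin.sum_univ_two, e3]
  ring

lemma mix_expand (G : Game (fun _ : Fin 3 => 2)) (i : Fin 3)
    (σ : ∀ j : Fin 3, Fin ((fun _ : Fin 3 => 2) j) → ℝ) :
    mixedPayoff G i σ =
      σ 0 0 * σ 1 0 * σ 2 0 * G i ![0,0,0] + σ 0 0 * σ 1 0 * σ 2 1 * G i ![0,0,1] +
      σ 0 0 * σ 1 1 * σ 2 0 * G i ![0,1,0] + σ 0 0 * σ 1 1 * σ 2 1 * G i ![0,1,1] +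
      σ 0 1 * σ 1 0 * σ 2 0 * G i ![1,0,0] + σ 0 1 * σ 1 0 * σ 2 1 * G i ![1,0,1] +
      σ 0 1 * σ 1 1 * σ 2 0 * G i ![1,1,0] + σ 0 1 * σ 1 1 * σ 2 1 * G i ![1,1,1] := by
  rw [mixedPayoff, sum_strat3]
  simp [Fin.prod_univ_three]

lemma mix_dev0 (G : Game (fun _ : Fin 3 => 2))
    (σ : ∀ j : Fin 3, Fin ((fun _ : Fin 3 => 2) j) → ℝ) :
    mixedPayoff G 0 σ = σ 0 0 * devPayoff G 0 σ 0 + σ 0 1 * devPayoff G 0 σ 1 := by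
  rw [mix_expand G 0 σ, devPayoff, devPayoff, mix_expand, mix_expand]
  simp [Function.update, pureStrat]
  try ring
lemma mix_dev1 (G : Game (fun _ : Fin 3 => 2))
    (σ : ∀ j : Fin 3, Fin ((fun _ : Fin 3 => 2) j) → ℝ) :
    mixedPayoff G 1 σ = σ 1 0 * devPayoff G 1 σ 0 + σ 1 1 * devPayoff G 1 σ 1 := by
  rw [mix_expand G 1 σ, devPayoff, devPayoff, mix_expand, mix_expand]
  simp [Function.update, pureStrat]
  try ring
lemma mix_dev2 (G : Game (fun _ : Fin 3 => 2))
    (σ : ∀ j : Fin 3, Fin ((fun _ : Fin 3 => 2) j) → ℝ) :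
    mixedPayoff G 2 σ = σ 2 0 * devPayoff G 2 σ 0 + σ 2 1 * devPayoff G 2 σ 1 := by
  rw [mix_expand G 2 σ, devPayoff, devPayoff, mix_expand, mix_expand]
  simp [Function.update, pureStrat]
  try ring
lemma mix_dev (G : Game (fun _ : Fin 3 => 2)) (i : Fin 3)
    (σ : ∀ j : Fin 3, Fin ((fun _ : Fin 3 => 2) j) → ℝ) :
    mixedPayoff G i σ = σ i 0 * devPayoff G i σ 0 + σ i 1 * devPayoff G i σ 1 := by
  fin_cases i
  · exact mix_dev0 G σ
  · exact mix_dev1 G σ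
  · exact mix_dev2 G σ

lemma dev00 (ε : ℝ) (σ : ∀ j : Fin 3, Fin ((fun _ : Fin 3 => 2) j) → ℝ) :
    devPayoff (Gfam ε) 0 σ 0 = σ 1 0 * σ 2 0 + σ 1 0 * σ 2 1 + σ 1 1 * σ 2 1 := by
  rw [devPayoff, mix_expand]; simp [Function.update, pureStrat, Gfam, eilTbl]; try ring
lemma dev01 (ε : ℝ) (σ : ∀ j : Fin 3, Fin ((fun _ : Fin 3 => 2) j) → ℝ) :
    devPayoff (Gfam ε) 0 σ 1 = σ 1 0 * σ 2 0 + σ 1 1 * σ 2 0 := by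
  rw [devPayoff, mix_expand]; simp [Function.update, pureStrat, Gfam, eilTbl]; try ring
lemma dev10 (ε : ℝ) (σ : ∀ j : Fin 3, Fin ((fun _ : Fin 3 => 2) j) → ℝ) :
    devPayoff (Gfam ε) 1 σ 0 = σ 0 0 * σ 2 0 + σ 0 1 * σ 2 0 + σ 0 1 * σ 2 1 := by
  rw [devPayoff, mix_expand]; simp [Function.update, pureStrat, Gfam, eilTbl]; try ring
lemma dev11 (ε : ℝ) (σ : ∀ j : Fin 3, Fin ((fun _ : Fin 3 => 2) j) → ℝ) :
    devPayoff (Gfam ε) 1 σ 1 = σ 0 0 * σ 2 0 + σ 0 0 * σ 2 1 := by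
  rw [devPayoff, mix_expand]; simp [Function.update, pureStrat, Gfam, eilTbl]; try ring
lemma dev20 (ε : ℝ) (σ : ∀ j : Fin 3, Fin ((fun _ : Fin 3 => 2) j) → ℝ) :
    devPayoff (Gfam ε) 2 σ 0 = σ 0 0 * σ 1 0 + σ 0 0 * σ 1 1 + σ 0 1 * σ 1 1 := by
  rw [devPayoff, mix_expand]; simp [Function.update, pureStrat, Gfam, eilTbl]; try ring
lemma dev21 (ε : ℝ) (σ : ∀ j : Fin 3, Fin ((fun _ : Fin 3 => 2) j) → ℝ) :
    devPayoff (Gfam ε) 2 σ 1 = σ 0 0 * σ 1 0 * (1 - ε) + σ 0 1 * σ 1 0 := by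
  rw [devPayoff, mix_expand]; simp [Function.update, pureStrat, Gfam, eilTbl]; try ring

lemma profB_nash (ε p : ℝ) (hε : 0 ≤ ε) (hp : 0 ≤ p) (hpε : p * (1 + ε) ≤ ε) :
    IsNash (Gfam ε) (profB p) := by
  have hp1 : p ≤ 1 := by nlinarith
  have v00 : profB p 0 0 = 1 - p := by simp [profB]
  have v01 : profB p 0 1 = p := by simp [profB]
  have v10 : profB p 1 0 = 1 := by simp [profB, pureStrat]
  have v11 : profB p 1 1 = 0 := by simp [profB, pureStrat]
  have v20 : profB p 2 0 = 1 := by simp [profB, pureStrat]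
  have v21 : profB p 2 1 = 0 := by simp [profB, pureStrat]
  constructor
  · intro j
    fin_cases j
    · exact ⟨fun a => by fin_cases a <;> simp [profB] <;> linarith,
        by rw [Fin.sum_univ_two]; simp [profB]⟩
    · exact ⟨fun a => by fin_cases a <;> simp [profB, pureStrat],
        by rw [Fin.sum_univ_two]; simp [profB, pureStrat]⟩
    · exact ⟨fun a => by fin_cases a <;> simp [profB, pureStrat],
        by rw [Fin.sum_univ_two]; simp [profB, pureStrat]⟩
  · intro i t
    rw [mix_dev]
    have h00 : devPayoff (Gfam ε) 0 (profB p) 0 ≤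
        profB p 0 0 * devPayoff (Gfam ε) 0 (profB p) 0 +
        profB p 0 1 * devPayoff (Gfam ε) 0 (profB p) 1 := by
      rw [dev00, dev01, v00, v01, v10, v11, v20, v21]; norm_num
    have h01 : devPayoff (Gfam ε) 0 (profB p) 1 ≤
        profB p 0 0 * devPayoff (Gfam ε) 0 (profB p) 0 +
        profB p 0 1 * devPayoff (Gfam ε) 0 (profB p) 1 := by
      rw [dev00, dev01, v00, v01, v10, v11, v20, v21]; norm_num
    have h10 : devPayoff (Gfam ε) 1 (profB p) 0 ≤
        profB p 1 0 * devPayoff (Gfam ε) 1 (profB p) 0 +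
        profB p 1 1 * devPayoff (Gfam ε) 1 (profB p) 1 := by
      rw [dev10, dev11, v00, v01, v10, v11, v20, v21]; norm_num <;> linarith
    have h11 : devPayoff (Gfam ε) 1 (profB p) 1 ≤
        profB p 1 0 * devPayoff (Gfam ε) 1 (profB p) 0 +
        profB p 1 1 * devPayoff (Gfam ε) 1 (profB p) 1 := by
      rw [dev10, dev11, v00, v01, v10, v11, v20, v21]; norm_num <;> linarith
    have h20 : devPayoff (Gfam ε) 2 (profB p) 0 ≤
        profB p 2 0 * devPayoff (Gfam ε) 2 (profB p) 0 +
        profB p 2 1 * devPayoff (Gfam ε) 2 (profB p) 1 := by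
      rw [dev20, dev21, v00, v01, v10, v11, v20, v21]; norm_num <;> nlinarith [hpε, hp, hε]
    have h21 : devPayoff (Gfam ε) 2 (profB p) 1 ≤
        profB p 2 0 * devPayoff (Gfam ε) 2 (profB p) 0 +
        profB p 2 1 * devPayoff (Gfam ε) 2 (profB p) 1 := by
      rw [dev20, dev21, v00, v01, v10, v11, v20, v21]; norm_num <;> nlinarith [hpε, hp, hε]
    fin_cases i <;> fin_cases t
    exacts [h00, h01, h10, h11, h20, h21]

lemma nash_zero_unique (σ : ∀ j : Fin 3, Fin ((fun _ : Fin 3 => 2) j) → ℝ)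
    (h : IsNash (Gfam 0) σ) : σ = profB 0 := by
  obtain ⟨hm, hle⟩ := h
  have hs0 : σ 0 0 + σ 0 1 = 1 := by have := (hm 0).2; rwa [Fin.sum_univ_two] at this
  have hs1 : σ 1 0 + σ 1 1 = 1 := by have := (hm 1).2; rwa [Fin.sum_univ_two] at this
  have hs2 : σ 2 0 + σ 2 1 = 1 := by have := (hm 2).2; rwa [Fin.sum_univ_two] at this
  have hn00 := (hm 0).1 0
  have hn01 := (hm 0).1 1
  have hn10 := (hm 1).1 0
  have hn11 := (hm 1).1 1
  have hn20 := (hm 2).1 0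
  have hn21 := (hm 2).1 1
  set p := σ 0 1 with hpdef
  set q := σ 1 1 with hqdef
  set r := σ 2 1 with hrdef
  have e0 : σ 0 0 = 1 - p := by linarith
  have e1 : σ 1 0 = 1 - q := by linarith
  have e2 : σ 2 0 = 1 - r := by linarith
  have A0 := hle 0 0
  have A1 := hle 0 1
  have B0 := hle 1 0
  have B1 := hle 1 1
  have C0 := hle 2 0
  have C1 := hle 2 1
  rw [mix_dev, dev00, dev01, e0, e1, e2] at A0 A1
  rw [mix_dev, dev10, dev11, e0, e1, e2] at B0 B1
  rw [mix_dev, dev20, dev21, e0, e1, e2] at C0 C1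
  have K1 : 0 ≤ p * (q - q*r - r) := by linarith
  have K2 : 0 ≤ (1-p) * (r + q*r - q) := by linarith
  have K3 : 0 ≤ q * (r - p*r - p) := by linarith
  have K4 : 0 ≤ (1-q) * (p + p*r - r) := by linarith
  have K5 : 0 ≤ r * (p - p*q - q) := by linarith
  have K6 : 0 ≤ (1-r) * (q + p*q - p) := by linarith
  have hprod : p * q * r = 0 := by
    have hle0 : p * q * r ≤ 0 := by linarith
    have hge0 : 0 ≤ p * q * r := by positivity
    linarith
  have hkey : p = 0 ∧ q = 0 ∧ r = 0 := by
    rcases mul_eq_zero.mp hprod with hpq | hr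
    · rcases mul_eq_zero.mp hpq with hp0 | hq0
      · -- p = 0
        rw [hp0] at K2 K4 K5
        have hr0 : r = 0 := by linarith
        rw [hr0] at K2
        have hq0 : q = 0 := by linarith
        exact ⟨hp0, hq0, hr0⟩
      · -- q = 0
        rw [hq0] at K1 K4 K6
        have hp0 : p = 0 := by linarith
        rw [hp0] at K4
        have hr0 : r = 0 := by linarith
        exact ⟨hp0, hq0, hr0⟩
    · -- r = 0
      rw [hr] at K2 K3 K6
      have hq0 : q = 0 := by linarith
      rw [hq0] at K6
      have hp0 : p = 0 := by linarith
      exact ⟨hp0, hq0, hr⟩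
  obtain ⟨hp0, hq0, hr0⟩ := hkey
  funext j b
  fin_cases j <;> fin_cases b <;> simp [profB, pureStrat] <;> linarith

lemma eil_close (ε : ℝ) (a b c : Fin 2) (i : Fin 3) :
    |eilTbl ε a b c i - eilTbl 0 a b c i| ≤ |ε| := by
  fin_cases a <;> fin_cases b <;> fin_cases c <;> fin_cases i <;>
    simp [eilTbl] <;> ring_nf <;> simp [abs_nonneg]

lemma profB_inj : Function.Injective profB := by
  intro x y hxy
  have := congrFun (congrFun hxy 0) 1
  simpa [profB] using this

/-- the set of three-player `2 × 2 × 2` games with a unique Nash equilibrium is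
not open; witness: `G_0` has a unique Nash equilibrium, while for every `ε > 0`, every mixed
profile in which players 2 and 3 play `L` and `W` and player 1 plays `B` with probability
`p < ε/(1+ε)` is a Nash equilibrium of `G_ε`, so `G_ε` has infinitely many Nash equilibria. -/
theorem statement13 :
    ¬ IsOpen {G : Game (fun _ : Fin 3 => 2) |
        ∃! σ : ∀ j : Fin 3, Fin ((fun _ : Fin 3 => 2) j) → ℝ, IsNash G σ} ∧
    (∃! σ : ∀ j : Fin 3, Fin ((fun _ : Fin 3 => 2) j) → ℝ, IsNash (Gfam 0) σ) ∧
    (∀ ε : ℝ, 0 < ε →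
      (∀ p : ℝ, 0 ≤ p → p < ε / (1 + ε) → IsNash (Gfam ε) (profB p)) ∧
      {σ : ∀ j : Fin 3, Fin ((fun _ : Fin 3 => 2) j) → ℝ | IsNash (Gfam ε) σ}.Infinite) := by
  have hpart2 : ∃! σ : ∀ j : Fin 3, Fin ((fun _ : Fin 3 => 2) j) → ℝ, IsNash (Gfam 0) σ :=
    ⟨profB 0, profB_nash 0 0 le_rfl le_rfl (by norm_num),
      fun σ h => nash_zero_unique σ h⟩
  have hpart3 : ∀ ε : ℝ, 0 < ε →
      (∀ p : ℝ, 0 ≤ p → p < ε / (1 + ε) → IsNash (Gfam ε) (profB p)) ∧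
      {σ : ∀ j : Fin 3, Fin ((fun _ : Fin 3 => 2) j) → ℝ | IsNash (Gfam ε) σ}.Infinite := by
    intro ε hε
    have h1ε : (0:ℝ) < 1 + ε := by linarith
    have hnash : ∀ p : ℝ, 0 ≤ p → p < ε / (1 + ε) → IsNash (Gfam ε) (profB p) := by
      intro p hp hplt
      have : p * (1 + ε) ≤ ε := by
        have := (lt_div_iff₀ h1ε).mp hplt
        linarith
      exact profB_nash ε p hε.le hp this
    refine ⟨hnash, ?_⟩
    have hpos : 0 < ε / (1 + ε) := by positivity
    have hsub : profB '' Set.Ico 0 (ε / (1 + ε)) ⊆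
        {σ : ∀ j : Fin 3, Fin ((fun _ : Fin 3 => 2) j) → ℝ | IsNash (Gfam ε) σ} := by
      rintro _ ⟨p, ⟨hp0, hp1⟩, rfl⟩
      exact hnash p hp0 hp1
    exact (((Set.Ico_infinite hpos).image (profB_inj.injOn)).mono hsub)
  refine ⟨?_, hpart2, hpart3⟩
  intro hopen
  obtain ⟨δ, hδ, hball⟩ := Metric.isOpen_iff.mp hopen (Gfam 0) hpart2
  have hmem : Gfam (δ/2) ∈ Metric.ball (Gfam 0) δ := by
    rw [Metric.mem_ball, dist_pi_lt_iff hδ]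
    intro i
    rw [dist_pi_lt_iff hδ]
    intro s
    rw [Real.dist_eq]
    have h1 : |Gfam (δ/2) i s - Gfam 0 i s| ≤ |δ/2| :=
      eil_close (δ/2) (s 0) (s 1) (s 2) i
    have h2 : |δ/2| = δ/2 := abs_of_nonneg (by linarith)
    linarith
  obtain ⟨σ₀, _, huniq⟩ := hball hmem
  have hfin : {σ : ∀ j : Fin 3, Fin ((fun _ : Fin 3 => 2) j) → ℝ | IsNash (Gfam (δ/2)) σ}
      ⊆ {σ₀} := fun σ h => huniq σ h
  exact (hpart3 (δ/2) (by linarith)).2 ((Set.finite_singleton σ₀).subset hfin)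
end

section
/- The set of two-player zero-sum games of size 3×2 in which the row (maximizing) player has a unique optimal strategy is not open. A witness is the family of zero-sum games with row-player payoff matrix M_ε = [[−ε, 0], [0, −1], [0, −1]]: for ε = 0 the row player has a unique optimal strategy (the pure first row), while for every ε > 0 the row player has infinitely many optimal strategies, namely all mixed strategies putting probability 1/(1+ε) on the first row and probabilities summing to ε/(1+ε) on the second and third rows. -/
/-- `min_j (xᵀ M)_j`: the worst-case payoff to the row player of the zero-sum game with
matrix `M` when playing the mixed strategy `x`. -/
noncomputable def minPay (M : Fin 3 → Fin 2 → ℝ) (x : Fin 3 → ℝ) : ℝ :=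
  Finset.univ.inf' Finset.univ_nonempty (fun j : Fin 2 => ∑ i, x i * M i j)

/-- `x` is an optimal strategy of the row (maximizing) player in the zero-sum game `M`:
`x` is a mixed strategy achieving `v = max_x min_j (xᵀ M)_j`. -/
noncomputable def IsOptimal (M : Fin 3 → Fin 2 → ℝ) (x : Fin 3 → ℝ) : Prop :=
  IsMixed x ∧ ∀ y : Fin 3 → ℝ, IsMixed y → minPay M y ≤ minPay M x

/-- The witness family of `3 × 2` zero-sum games `M_ε = [[−ε, 0], [0, −1], [0, −1]]`. -/
noncomputable def Mfam (ε : ℝ) : Fin 3 → Fin 2 → ℝ := ![![-ε, 0], ![0, -1], ![0, -1]]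

lemma inf2 (f : Fin 2 → ℝ) : Finset.univ.inf' Finset.univ_nonempty f = min (f 0) (f 1) := by
  apply le_antisymm
  · exact le_min (Finset.inf'_le f (Finset.mem_univ 0)) (Finset.inf'_le f (Finset.mem_univ 1))
  · apply Finset.le_inf'
    intro j _
    fin_cases j
    exacts [min_le_left _ _, min_le_right _ _]

lemma minPay_Mfam (ε : ℝ) (x : Fin 3 → ℝ) :
    minPay (Mfam ε) x = min (-(x 0 * ε)) (-(x 1 + x 2)) := by
  rw [minPay, inf2]
  simp [Mfam, Fin.sum_univ_three, Matrix.vecHead, Matrix.vecTail]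
  ring_nf

lemma mixed_sum {x : Fin 3 → ℝ} (hx : IsMixed x) : x 0 + x 1 + x 2 = 1 := by
  have := hx.2
  rwa [Fin.sum_univ_three] at this

lemma pure_mixed : IsMixed (pureStrat (0 : Fin 3)) := by
  constructor
  · intro a; unfold pureStrat; split <;> norm_num
  · rw [Fin.sum_univ_three]; simp [pureStrat]

lemma minPay_pure : minPay (Mfam 0) (pureStrat 0) = 0 := by
  rw [minPay_Mfam]
  simp [pureStrat]

lemma optimal0 (x : Fin 3 → ℝ) : IsOptimal (Mfam 0) x ↔ x = pureStrat 0 := by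
  constructor
  · rintro ⟨hm, hopt⟩
    have h := hopt (pureStrat 0) pure_mixed
    rw [minPay_pure, minPay_Mfam] at h
    have h2 : (0:ℝ) ≤ -(x 1 + x 2) := le_trans h (min_le_right _ _)
    have h1 := hm.1 1
    have h2' := hm.1 2
    have hx1 : x 1 = 0 := by linarith
    have hx2 : x 2 = 0 := by linarith
    have hx0 : x 0 = 1 := by have := mixed_sum hm; linarith
    funext i
    fin_cases i <;> simp [pureStrat, hx0, hx1, hx2]
  · rintro rfl
    refine ⟨pure_mixed, fun y hy => ?_⟩
    rw [minPay_pure, minPay_Mfam]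
    have h1 := hy.1 1
    have h2 := hy.1 2
    have : -(y 1 + y 2) ≤ 0 := by linarith
    exact le_trans (min_le_right _ _) this

lemma minPay_le (ε : ℝ) (hε : 0 < ε) {y : Fin 3 → ℝ} (hy : IsMixed y) :
    minPay (Mfam ε) y ≤ -(ε / (1 + ε)) := by
  have h1ε : (0:ℝ) < 1 + ε := by linarith
  rw [minPay_Mfam]
  rcases le_total (y 0) (1 / (1 + ε)) with h | h
  · refine le_trans (min_le_right _ _) ?_
    have hs := mixed_sum hy
    have key : (1/(1+ε)) * (1+ε) = 1 := by field_simp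
    have : ε / (1 + ε) ≤ y 1 + y 2 := by
      rw [div_le_iff₀ h1ε]
      nlinarith [h]
    linarith
  · refine le_trans (min_le_left _ _) ?_
    have key : (1/(1+ε)) * (1+ε) = 1 := by field_simp
    have : ε / (1 + ε) ≤ y 0 * ε := by
      rw [div_le_iff₀ h1ε]
      nlinarith [mul_le_mul_of_nonneg_right h (le_of_lt h1ε), key]
    linarith

lemma opt_eps (ε : ℝ) (hε : 0 < ε) (p q : ℝ) (hp : 0 ≤ p) (hq : 0 ≤ q)
    (hpq : p + q = ε / (1 + ε)) : IsOptimal (Mfam ε) ![1 / (1 + ε), p, q] := by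
  have h1ε : (0:ℝ) < 1 + ε := by linarith
  have hmix : IsMixed ![1 / (1 + ε), p, q] := by
    constructor
    · intro a; fin_cases a <;> simp [*] <;> positivity
    · rw [Fin.sum_univ_three]
      simp only [Matrix.cons_val_zero, Matrix.cons_val_one, Matrix.head_cons,
        Matrix.cons_val_two, Matrix.tail_cons]
      rw [add_assoc, hpq]; field_simp
  refine ⟨hmix, fun y hy => ?_⟩
  refine le_trans (minPay_le ε hε hy) ?_
  rw [minPay_Mfam]
  simp only [Matrix.cons_val_zero, Matrix.cons_val_one, Matrix.head_cons,
    Matrix.cons_val_two, Matrix.tail_cons]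
  rw [hpq, one_div, inv_mul_eq_div, min_self]

lemma infinite_eps (ε : ℝ) (hε : 0 < ε) :
    {x : Fin 3 → ℝ | IsOptimal (Mfam ε) x}.Infinite := by
  have h1ε : (0:ℝ) < 1 + ε := by linarith
  set c := ε / (1 + ε) with hc
  have hcpos : 0 < c := div_pos hε h1ε
  apply Set.infinite_of_injective_forall_mem
    (f := fun n : ℕ => ![1 / (1 + ε), c / (n + 1), c - c / (n + 1)])
  · intro m n hmn
    have h1 : c / ((m:ℝ) + 1) = c / ((n:ℝ) + 1) := by
      have := congrFun hmn 1
      simpa using this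
    field_simp at h1
    exact_mod_cast (by linarith : (m:ℝ) = n)
  · intro n
    have hn : (0:ℝ) < (n:ℝ) + 1 := by positivity
    have hd : 0 ≤ c / ((n:ℝ) + 1) := by positivity
    have hle : c / ((n:ℝ) + 1) ≤ c := by
      apply div_le_self (le_of_lt hcpos)
      linarith
    exact opt_eps ε hε _ _ hd (by linarith) (by ring)

/-- the set of `3 × 2` zero-sum games in which the row player has a unique
optimal strategy is not open; witness: in `M_0` the unique optimal strategy of the row player
is the pure first row, while for every `ε > 0` every mixed strategy putting probability
`1/(1+ε)` on the first row (and probabilities summing to `ε/(1+ε)` on the other two rows)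
is optimal in `M_ε`, so the row player has infinitely many optimal strategies. -/
theorem statement15 :
    ¬ IsOpen {M : Fin 3 → Fin 2 → ℝ | ∃! x : Fin 3 → ℝ, IsOptimal M x} ∧
    (∀ x : Fin 3 → ℝ, IsOptimal (Mfam 0) x ↔ x = pureStrat 0) ∧
    (∀ ε : ℝ, 0 < ε →
      (∀ p q : ℝ, 0 ≤ p → 0 ≤ q → p + q = ε / (1 + ε) →
        IsOptimal (Mfam ε) ![1 / (1 + ε), p, q]) ∧
      {x : Fin 3 → ℝ | IsOptimal (Mfam ε) x}.Infinite) := by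
  refine ⟨?_, optimal0, fun ε hε => ⟨fun p q hp hq hpq => opt_eps ε hε p q hp hq hpq,
    infinite_eps ε hε⟩⟩
  intro hopen
  have hcont : Continuous Mfam := by
    apply continuous_pi; intro i; apply continuous_pi; intro j
    fin_cases i <;> fin_cases j <;> simp [Mfam] <;> fun_prop
  have hmem : Mfam 0 ∈ {M : Fin 3 → Fin 2 → ℝ | ∃! x : Fin 3 → ℝ, IsOptimal M x} :=
    ⟨pureStrat 0, (optimal0 _).mpr rfl, fun y hy => (optimal0 y).mp hy⟩
  have hpre : IsOpen (Mfam ⁻¹' {M : Fin 3 → Fin 2 → ℝ | ∃! x, IsOptimal M x}) :=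
    hopen.preimage hcont
  obtain ⟨δ, hδ, hball⟩ := Metric.isOpen_iff.mp hpre 0 hmem
  have hεmem : (δ/2 : ℝ) ∈ Metric.ball (0:ℝ) δ := by
    have : dist (δ/2 : ℝ) 0 < δ := by
      rw [Real.dist_eq, sub_zero, abs_of_pos (by linarith : (0:ℝ) < δ/2)]
      linarith
    exact Metric.mem_ball.mpr this
  have hu : ∃! x, IsOptimal (Mfam (δ/2)) x := hball hεmem
  obtain ⟨x0, hx0, huniq⟩ := hu
  obtain ⟨a, ha, b, hb, hab⟩ := (infinite_eps (δ/2) (by linarith)).nontrivial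
  exact hab ((huniq a ha).trans (huniq b hb).symm)
end

section
/- If a two-player finite game has a unique correlated equilibrium μ and μ has full support (μ(s) > 0 for every pure strategy profile s), then there exists a neighborhood of the game (in the space of games of the same size) such that every game in this neighborhood has a unique correlated equilibrium, and this correlated equilibrium has full support. -/
/-- A bimatrix game of size `k₁ × k₂`: the pair of payoff functions (row player, column
player). The space of such games carries the (product, i.e. Euclidean) topology. -/
abbrev BiGame (k₁ k₂ : ℕ) : Type := (Fin k₁ → Fin k₂ → ℝ) × (Fin k₁ → Fin k₂ → ℝ)

/-- Correlated equilibrium of a bimatrix game: a probability distribution on pure strategy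
profiles satisfying all incentive constraints. -/
def IsCE {k₁ k₂ : ℕ} (G : BiGame k₁ k₂) (μ : Fin k₁ × Fin k₂ → ℝ) : Prop :=
  (∀ s, 0 ≤ μ s) ∧ (∑ s, μ s = 1) ∧
    (∀ a a' : Fin k₁, 0 ≤ ∑ b, μ (a, b) * (G.1 a b - G.1 a' b)) ∧
    (∀ b b' : Fin k₂, 0 ≤ ∑ a, μ (a, b) * (G.2 a b - G.2 a b'))

open Finset

namespace CEAux

abbrev SP (k₁ k₂ : ℕ) := Fin k₁ × Fin k₂
abbrev RI (k₁ k₂ : ℕ) := (Fin k₁ × Fin k₁) ⊕ (Fin k₂ × Fin k₂)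

variable {k₁ k₂ : ℕ}

/-- coefficient vector of incentive constraint `r` -/
def avec (G : BiGame k₁ k₂) : RI k₁ k₂ → SP k₁ k₂ → ℝ
  | Sum.inl p => fun s => if s.1 = p.1 then G.1 p.1 s.2 - G.1 p.2 s.2 else 0
  | Sum.inr p => fun s => if s.2 = p.1 then G.2 s.1 p.1 - G.2 s.1 p.2 else 0

/-- value of incentive constraint `r` at distribution `ν` -/
def Aval (G : BiGame k₁ k₂) (r : RI k₁ k₂) (ν : SP k₁ k₂ → ℝ) : ℝ :=
  ∑ s, ν s * avec G r s

lemma Aval_inl (G : BiGame k₁ k₂) (a a' : Fin k₁) (ν : SP k₁ k₂ → ℝ) :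
    Aval G (Sum.inl (a, a')) ν = ∑ b, ν (a, b) * (G.1 a b - G.1 a' b) := by
  rw [Aval, Fintype.sum_prod_type]
  rw [Finset.sum_eq_single a]
  · simp [avec]
  · intro c _ hc
    simp [avec, hc]
  · simp

lemma Aval_inr (G : BiGame k₁ k₂) (b b' : Fin k₂) (ν : SP k₁ k₂ → ℝ) :
    Aval G (Sum.inr (b, b')) ν = ∑ a, ν (a, b) * (G.2 a b - G.2 a b') := by
  rw [Aval, Fintype.sum_prod_type_right]
  rw [Finset.sum_eq_single b]
  · simp [avec]
  · intro c _ hc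
    simp [avec, hc]
  · simp

lemma isCE_iff (G : BiGame k₁ k₂) (ν : SP k₁ k₂ → ℝ) :
    IsCE G ν ↔ (∀ s, 0 ≤ ν s) ∧ (∑ s, ν s = 1) ∧ ∀ r, 0 ≤ Aval G r ν := by
  constructor
  · rintro ⟨h0, h1, h2, h3⟩
    refine ⟨h0, h1, ?_⟩
    rintro (⟨a, a'⟩ | ⟨b, b'⟩)
    · rw [Aval_inl]; exact h2 a a'
    · rw [Aval_inr]; exact h3 b b'
  · rintro ⟨h0, h1, h2⟩
    refine ⟨h0, h1, fun a a' => ?_, fun b b' => ?_⟩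
    · have := h2 (Sum.inl (a, a')); rwa [Aval_inl] at this
    · have := h2 (Sum.inr (b, b')); rwa [Aval_inr] at this

lemma Aval_add_smul (G : BiGame k₁ k₂) (r : RI k₁ k₂) (x y : SP k₁ k₂ → ℝ) (t : ℝ) :
    Aval G r (x + t • y) = Aval G r x + t * Aval G r y := by
  simp only [Aval, Pi.add_apply, Pi.smul_apply, smul_eq_mul, add_mul, Finset.sum_add_distrib,
    Finset.mul_sum, mul_assoc]

lemma Aval_add (G : BiGame k₁ k₂) (r : RI k₁ k₂) (x y : SP k₁ k₂ → ℝ) :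
    Aval G r (x + y) = Aval G r x + Aval G r y := by
  simpa using Aval_add_smul G r x y 1

lemma Aval_smul (G : BiGame k₁ k₂) (r : RI k₁ k₂) (x : SP k₁ k₂ → ℝ) (t : ℝ) :
    Aval G r (t • x) = t * Aval G r x := by
  have := Aval_add_smul G r 0 x t
  simpa [Aval] using this



lemma exists_stationary {ι : Type*} [Fintype ι] [Nonempty ι] (y : ι → ι → ℝ)
    (hy : ∀ a b, 0 ≤ y a b) :
    ∃ σ : ι → ℝ, (∀ a, 0 ≤ σ a) ∧ (∑ a, σ a = 1) ∧
      ∀ b, ∑ a, σ a * y a b = σ b * ∑ c, y b c := by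
  classical
  set M : ℝ := (∑ a, ∑ b, y a b) + 1 with hM
  have hM0 : 0 < M := by
    have : 0 ≤ ∑ a, ∑ b, y a b :=
      Finset.sum_nonneg fun a _ => Finset.sum_nonneg fun b _ => hy a b
    simp only [hM]; linarith
  have hRM : ∀ a, ∑ b, y a b ≤ M := by
    intro a
    have h1 : ∑ b, y a b ≤ ∑ a, ∑ b, y a b :=
      Finset.single_le_sum (f := fun a => ∑ b, y a b)
        (fun a _ => Finset.sum_nonneg fun b _ => hy a b) (Finset.mem_univ a)
    simp only [hM]; linarith
  set Qf : (ι → ℝ) → (ι → ℝ) :=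
    fun σ b => (∑ a, σ a * y a b) / M + σ b * (1 - (∑ c, y b c) / M) with hQf
  have hQadd : ∀ σ τ, Qf (σ + τ) = Qf σ + Qf τ := by
    intro σ τ
    funext b
    simp only [hQf, Pi.add_apply, add_mul, Finset.sum_add_distrib, add_div]
    ring
  have hQsmul : ∀ (t : ℝ) σ, Qf (t • σ) = t • Qf σ := by
    intro t σ
    funext b
    simp only [hQf, Pi.smul_apply, smul_eq_mul]
    rw [show (∑ a, t * σ a * y a b) = t * ∑ a, σ a * y a b by
      rw [Finset.mul_sum]; exact Finset.sum_congr rfl fun a _ => by ring]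
    ring
  set Q : (ι → ℝ) →ₗ[ℝ] (ι → ℝ) :=
    { toFun := Qf, map_add' := hQadd, map_smul' := hQsmul } with hQdef
  have hQapp : ∀ σ, Q σ = Qf σ := fun _ => rfl
  have hQmem : ∀ σ ∈ stdSimplex ℝ ι, Q σ ∈ stdSimplex ℝ ι := by
    rintro σ ⟨hσ0, hσ1⟩
    constructor
    · intro b
      have h1 : 0 ≤ (∑ a, σ a * y a b) / M :=
        div_nonneg (Finset.sum_nonneg fun a _ => mul_nonneg (hσ0 a) (hy a b)) hM0.le
      have h2 : (∑ c, y b c) / M ≤ 1 := by rw [div_le_one hM0]; exact hRM b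
      have h3 : 0 ≤ σ b * (1 - (∑ c, y b c) / M) := mul_nonneg (hσ0 b) (by linarith)
      rw [hQapp]
      exact add_nonneg h1 h3
    · rw [hQapp]
      have e1 : ∀ a : ι, ∑ b, σ a * y a b = σ a * ∑ b, y a b := fun a => by
        rw [Finset.mul_sum]
      have key : ∑ b, (∑ a, σ a * y a b) / M = ∑ b, σ b * ((∑ c, y b c) / M) := by
        rw [← Finset.sum_div, Finset.sum_comm]
        rw [Finset.sum_congr rfl fun a _ => e1 a]
        rw [Finset.sum_div]
        exact Finset.sum_congr rfl fun a _ => mul_div_assoc _ _ _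
      calc ∑ b, ((∑ a, σ a * y a b) / M + σ b * (1 - (∑ c, y b c) / M))
          = ∑ b, (∑ a, σ a * y a b) / M
            + (∑ b, σ b - ∑ b, σ b * ((∑ c, y b c) / M)) := by
            rw [Finset.sum_add_distrib, ← Finset.sum_sub_distrib]
            congr 1
            exact Finset.sum_congr rfl fun b _ => by ring
        _ = 1 := by rw [key, hσ1]; ring
  set σ₀ : ι → ℝ := fun _ => (Fintype.card ι : ℝ)⁻¹ with hσ₀
  have hcard : (0:ℝ) < Fintype.card ι := by exact_mod_cast Fintype.card_pos
  have hσ₀mem : σ₀ ∈ stdSimplex ℝ ι := by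
    constructor
    · intro a; simp only [hσ₀]; positivity
    · simp only [hσ₀, Finset.sum_const, nsmul_eq_mul]
      rw [Finset.card_univ, mul_inv_cancel₀ (ne_of_gt hcard)]
  set v : ℕ → ι → ℝ := fun n => (⇑Q)^[n] σ₀ with hv
  have hvmem : ∀ n, v n ∈ stdSimplex ℝ ι := by
    intro n
    induction n with
    | zero => simpa [hv] using hσ₀mem
    | succ n ih =>
        have : v (n+1) = Q (v n) := by
          simp only [hv, Function.iterate_succ_apply']
        rw [this]; exact hQmem _ ih
  set c : ℕ → ι → ℝ := fun n => ((n:ℝ)+1)⁻¹ • ∑ i ∈ Finset.range (n+1), v i with hc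
  have hcmem : ∀ n, c n ∈ stdSimplex ℝ ι := by
    intro n
    have hn0 : (0:ℝ) < (n:ℝ)+1 := by positivity
    constructor
    · intro b
      simp only [hc, Pi.smul_apply, smul_eq_mul, Finset.sum_apply]
      exact mul_nonneg (by positivity)
        (Finset.sum_nonneg fun i _ => (hvmem i).1 b)
    · simp only [hc, Pi.smul_apply, smul_eq_mul, Finset.sum_apply]
      rw [← Finset.mul_sum, Finset.sum_comm]
      rw [Finset.sum_congr rfl fun i (_ : i ∈ Finset.range (n+1)) => (hvmem i).2]
      simp only [Finset.sum_const, Finset.card_range, nsmul_eq_mul, mul_one]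
      push_cast
      rw [inv_mul_cancel₀ (ne_of_gt hn0)]
  obtain ⟨σ, hσmem, φ, hφmono, hφlim⟩ :=
    (isCompact_stdSimplex ℝ ι).tendsto_subseq hcmem
  have htel : ∀ n, Q (c n) - c n = ((n:ℝ)+1)⁻¹ • (v (n+1) - v 0) := by
    intro n
    have hmap : Q (c n) = ((n:ℝ)+1)⁻¹ • ∑ i ∈ Finset.range (n+1), v (i+1) := by
      simp only [hc, map_smul, map_sum]
      congr 1
      refine Finset.sum_congr rfl fun i _ => ?_
      simp only [hv, Function.iterate_succ_apply']
    have h1 : (∑ i ∈ Finset.range (n+1), v (i+1)) + v 0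
        = (∑ i ∈ Finset.range (n+1), v i) + v (n+1) := by
      rw [← Finset.sum_range_succ' (fun i => v i) (n+1), Finset.sum_range_succ]
    rw [hmap, hc, ← smul_sub]
    congr 1
    funext b
    have hb := congrFun h1 b
    simp only [Pi.add_apply, Finset.sum_apply, Pi.sub_apply] at hb ⊢
    linarith
  have hvbd : ∀ n b, |v n b| ≤ 1 := by
    intro n b
    rw [abs_of_nonneg ((hvmem n).1 b)]
    calc v n b ≤ ∑ b', v n b' :=
          Finset.single_le_sum (fun b' _ => (hvmem n).1 b') (Finset.mem_univ b)
      _ = 1 := (hvmem n).2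
  have herr : Filter.Tendsto (fun n => Q (c (φ n)) - c (φ n)) Filter.atTop (nhds 0) := by
    rw [tendsto_pi_nhds]
    intro b
    simp only [Pi.zero_apply]
    have part1 : ∀ n, ‖(Q (c (φ n)) - c (φ n)) b‖ ≤ 2 / ((n:ℝ)+1) := by
      intro n
      
      have hb := congrFun (htel (φ n)) b
      simp only [Pi.sub_apply, Pi.smul_apply, smul_eq_mul] at hb ⊢
      rw [hb]
      have h2 : |v (φ n + 1) b - v 0 b| ≤ 2 := by
        calc |v (φ n + 1) b - v 0 b| ≤ |v (φ n + 1) b| + |v 0 b| := abs_sub _ _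
          _ ≤ 2 := by linarith [hvbd (φ n + 1) b, hvbd 0 b]
      have hφn : (n:ℝ) + 1 ≤ (φ n : ℝ) + 1 := by
        have h : n ≤ φ n := hφmono.le_apply
        have : (n:ℝ) ≤ (φ n : ℝ) := by exact_mod_cast h
        linarith
      have hpos : (0:ℝ) < (φ n:ℝ)+1 := by positivity
      rw [Real.norm_eq_abs, abs_mul, abs_inv, abs_of_pos hpos]
      have hinv : ((φ n:ℝ)+1)⁻¹ ≤ ((n:ℝ)+1)⁻¹ := by
        gcongr
      have := mul_le_mul hinv h2 (abs_nonneg _) (by positivity : (0:ℝ) ≤ ((n:ℝ)+1)⁻¹)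
      calc ((φ n:ℝ)+1)⁻¹ * |v (φ n + 1) b - v 0 b| ≤ ((n:ℝ)+1)⁻¹ * 2 := this
        _ = 2 / ((n:ℝ)+1) := by rw [div_eq_mul_inv]; ring
    have part2 : Filter.Tendsto (fun n : ℕ => 2 / ((n:ℝ)+1)) Filter.atTop (nhds 0) := by
      have h0 : Filter.Tendsto (fun n : ℕ => ((n:ℝ)+1)⁻¹) Filter.atTop (nhds 0) := by
        have := tendsto_one_div_add_atTop_nhds_zero_nat (𝕜 := ℝ)
        simpa [one_div] using this
      have h2 := h0.const_mul (2:ℝ)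
      simp only [mul_zero] at h2
      have heq2 : (fun n : ℕ => 2 / ((n:ℝ)+1)) = fun n : ℕ => 2 * ((n:ℝ)+1)⁻¹ := by
        funext n; rw [div_eq_mul_inv]
      rw [heq2]
      exact h2
    exact squeeze_zero_norm part1 part2
  have hQcont : Continuous Q := Q.continuous_of_finiteDimensional
  have hlim1 : Filter.Tendsto (fun n => Q (c (φ n))) Filter.atTop (nhds (Q σ)) :=
    (hQcont.tendsto σ).comp hφlim
  have hlim2 : Filter.Tendsto (fun n => Q (c (φ n))) Filter.atTop (nhds σ) := by
    have heq : (fun n => Q (c (φ n))) = fun n => (Q (c (φ n)) - c (φ n)) + c (φ n) := by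
      funext n; abel
    rw [heq]
    have := herr.add hφlim
    simpa using this
  have hfix : Q σ = σ := tendsto_nhds_unique hlim1 hlim2
  refine ⟨σ, hσmem.1, hσmem.2, fun b => ?_⟩
  have hb := congrFun hfix b
  rw [hQapp] at hb
  simp only [hQf] at hb
  have hMne : M ≠ 0 := ne_of_gt hM0
  field_simp at hb
  linarith



variable {k₁ k₂ : ℕ}

/-- the per-player cancellation: a stationary distribution annihilates the
weighted sum of deviation values -/
lemma balance_sum_zero {ι : Type*} [Fintype ι] (y : ι → ι → ℝ) (σ u : ι → ℝ)
    (hbal : ∀ b, ∑ a, σ a * y a b = σ b * ∑ c, y b c) :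
    ∑ a, ∑ a', y a a' * (σ a * (u a - u a')) = 0 := by
  have e1 : ∀ a, ∑ a', y a a' * (σ a * (u a - u a'))
      = σ a * u a * (∑ a', y a a') - ∑ a', σ a * y a a' * u a' := by
    intro a
    rw [Finset.mul_sum, ← Finset.sum_sub_distrib]
    exact Finset.sum_congr rfl fun a' _ => by ring
  rw [Finset.sum_congr rfl fun a _ => e1 a, Finset.sum_sub_distrib]
  rw [Finset.sum_comm (f := fun a a' => σ a * y a a' * u a')]
  have e2 : ∀ a', ∑ a, σ a * y a a' * u a' = σ a' * (∑ c, y a' c) * u a' := by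
    intro a'
    rw [show (∑ a, σ a * y a a' * u a') = (∑ a, σ a * y a a') * u a' by
      rw [Finset.sum_mul], hbal a']
  rw [Finset.sum_congr rfl fun a' _ => e2 a']
  rw [sub_eq_zero]
  exact Finset.sum_congr rfl fun a _ => by ring

/-- HS duality input: for any nonnegative weights on the incentive constraints there is a
distribution whose weighted constraint value vanishes. -/
lemma key_pair (hk₁ : 0 < k₁) (hk₂ : 0 < k₂) (G : BiGame k₁ k₂) (y : RI k₁ k₂ → ℝ)
    (hy : ∀ r, 0 ≤ y r) :
    ∃ ν : SP k₁ k₂ → ℝ, (∀ s, 0 ≤ ν s) ∧ (∑ s, ν s = 1) ∧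
      ∑ r, y r * Aval G r ν = 0 := by
  have : Nonempty (Fin k₁) := ⟨⟨0, hk₁⟩⟩
  have : Nonempty (Fin k₂) := ⟨⟨0, hk₂⟩⟩
  obtain ⟨σ₁, hσ₁0, hσ₁1, hσ₁bal⟩ :=
    exists_stationary (fun a a' => y (Sum.inl (a, a'))) (fun a a' => hy _)
  obtain ⟨σ₂, hσ₂0, hσ₂1, hσ₂bal⟩ :=
    exists_stationary (fun b b' => y (Sum.inr (b, b'))) (fun b b' => hy _)
  refine ⟨fun s => σ₁ s.1 * σ₂ s.2, fun s => mul_nonneg (hσ₁0 s.1) (hσ₂0 s.2), ?_, ?_⟩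
  · rw [Fintype.sum_prod_type]
    rw [Finset.sum_congr rfl fun a (_ : a ∈ Finset.univ) =>
      (Finset.mul_sum Finset.univ (fun b => σ₂ b) (σ₁ a)).symm]
    rw [← Finset.sum_mul, hσ₁1, hσ₂1, one_mul]
  · rw [Fintype.sum_sum_type]
    have hpart1 : ∑ p : Fin k₁ × Fin k₁, y (Sum.inl p) * Aval G (Sum.inl p)
        (fun s => σ₁ s.1 * σ₂ s.2) = 0 := by
      rw [Fintype.sum_prod_type]
      have e : ∀ a a', y (Sum.inl (a, a')) * Aval G (Sum.inl (a, a')) (fun s => σ₁ s.1 * σ₂ s.2)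
          = y (Sum.inl (a, a')) * (σ₁ a *
            ((∑ b, σ₂ b * G.1 a b) - ∑ b, σ₂ b * G.1 a' b)) := by
        intro a a'
        rw [Aval_inl]
        congr 1
        rw [← Finset.sum_sub_distrib, Finset.mul_sum]
        exact Finset.sum_congr rfl fun b _ => by ring
      rw [Finset.sum_congr rfl fun a _ => Finset.sum_congr rfl fun a' _ => e a a']
      exact balance_sum_zero (fun a a' => y (Sum.inl (a, a'))) σ₁
        (fun a => ∑ b, σ₂ b * G.1 a b) hσ₁bal
    have hpart2 : ∑ p : Fin k₂ × Fin k₂, y (Sum.inr p) * Aval G (Sum.inr p)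
        (fun s => σ₁ s.1 * σ₂ s.2) = 0 := by
      rw [Fintype.sum_prod_type]
      have e : ∀ b b', y (Sum.inr (b, b')) * Aval G (Sum.inr (b, b')) (fun s => σ₁ s.1 * σ₂ s.2)
          = y (Sum.inr (b, b')) * (σ₂ b *
            ((∑ a, σ₁ a * G.2 a b) - ∑ a, σ₁ a * G.2 a b')) := by
        intro b b'
        rw [Aval_inr]
        congr 1
        rw [← Finset.sum_sub_distrib, Finset.mul_sum]
        exact Finset.sum_congr rfl fun a _ => by ring
      rw [Finset.sum_congr rfl fun b _ => Finset.sum_congr rfl fun b' _ => e b b']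
      exact balance_sum_zero (fun b b' => y (Sum.inr (b, b'))) σ₂
        (fun b => ∑ a, σ₁ a * G.2 a b) hσ₂bal
    rw [hpart1, hpart2, add_zero]

/-- Every bimatrix game has a correlated equilibrium (Hart–Schmeidler). -/
theorem exists_CE (hk₁ : 0 < k₁) (hk₂ : 0 < k₂) (G : BiGame k₁ k₂) :
    ∃ ν, IsCE G ν := by
  classical
  by_contra hno
  push_neg at hno
  -- the linear constraint-value map
  set Λ : (SP k₁ k₂ → ℝ) →ₗ[ℝ] (RI k₁ k₂ → ℝ) :=
    { toFun := fun ν r => Aval G r ν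
      map_add' := by
        intro x y'
        funext r
        simp only [Pi.add_apply]
        exact Aval_add G r x y'
      map_smul' := by
        intro t x
        funext r
        simp only [Pi.smul_apply, RingHom.id_apply, smul_eq_mul]
        exact Aval_smul G r x t } with hΛ
  have hΛapp : ∀ ν r, Λ ν r = Aval G r ν := fun _ _ => rfl
  set C : Set (RI k₁ k₂ → ℝ) := Λ '' stdSimplex ℝ (SP k₁ k₂) with hC
  have hCcvx : Convex ℝ C := (convex_stdSimplex ℝ _).linear_image Λ
  have hCcpt : IsCompact C :=
    (isCompact_stdSimplex ℝ _).image Λ.continuous_of_finiteDimensional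
  set pos : Set (RI k₁ k₂ → ℝ) := {x | ∀ r, 0 ≤ x r} with hpos
  have hposcvx : Convex ℝ pos := by
    intro x hx y' hy' a b ha hb hab r
    have := hx r
    have := hy' r
    simp only [Pi.add_apply, Pi.smul_apply, smul_eq_mul]
    positivity
  have hposcl : IsClosed pos := by
    have : pos = ⋂ r, (fun x : RI k₁ k₂ → ℝ => x r) ⁻¹' Set.Ici 0 := by
      ext x; simp [hpos, Set.mem_iInter]
    rw [this]
    exact isClosed_iInter fun r => isClosed_Ici.preimage (continuous_apply r)
  have hdisj : Disjoint pos C := by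
    rw [Set.disjoint_left]
    rintro x hxpos ⟨ν, hνmem, rfl⟩
    exact hno ν ((isCE_iff G ν).2 ⟨hνmem.1, hνmem.2, fun r => hxpos r⟩)
  obtain ⟨f, u, v, hfu, huv, hfv⟩ :=
    geometric_hahn_banach_closed_compact hposcvx hposcl hCcvx hCcpt hdisj
  have hu0 : 0 < u := by
    have := hfu 0 (fun r => le_refl 0)
    simpa using this
  set e : RI k₁ k₂ → (RI k₁ k₂ → ℝ) := fun r j => if r = j then 1 else 0 with he
  have hfe : ∀ r, f (e r) ≤ 0 := by
    intro r
    by_contra hpos'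
    push_neg at hpos'
    have hmem : ((u + 1) / f (e r)) • e r ∈ pos := by
      intro j
      simp only [Pi.smul_apply, smul_eq_mul, he]
      have : (0:ℝ) ≤ (u + 1) / f (e r) := by positivity
      split <;> simp only [mul_one, mul_zero, le_refl] <;> exact this
    have := hfu _ hmem
    rw [map_smul, smul_eq_mul, div_mul_cancel₀ _ (ne_of_gt hpos')] at this
    linarith
  obtain ⟨ν, hν0, hν1, hνval⟩ := key_pair hk₁ hk₂ G (fun r => -f (e r))
    (fun r => neg_nonneg.2 (hfe r))
  have hνC : Λ ν ∈ C := ⟨ν, ⟨hν0, hν1⟩, rfl⟩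
  have hval : f (Λ ν) = -∑ r, (fun r => -f (e r)) r * Aval G r ν := by
    have := LinearMap.pi_apply_eq_sum_univ
      (f.toLinearMap.comp (LinearMap.id : (RI k₁ k₂ → ℝ) →ₗ[ℝ] _)) (Λ ν)
    simp only [LinearMap.comp_apply, LinearMap.id_apply, ContinuousLinearMap.coe_coe] at this
    rw [this, ← Finset.sum_neg_distrib]
    refine Finset.sum_congr rfl fun r _ => ?_
    rw [hΛapp]
    simp only [smul_eq_mul, he]
    ring
  have := hfv _ hνC
  rw [hval, hνval] at this
  simp at this
  linarith




/-- From the pointedness of the feasible cone, produce strictly positive weights whose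
combination of the constraint vectors vanishes. -/
lemma exists_pos_combination {κ ι : Type*} [Fintype κ] [Fintype ι] [Nonempty κ] [Nonempty ι]
    (w : κ → ι → ℝ) (hwH : ∀ r, ∑ s, w r s = 0)
    (hcone : ∀ x : ι → ℝ, (∑ s, x s = 0) → (∀ r, 0 ≤ ∑ s, w r s * x s) → x = 0) :
    ∃ y : κ → ℝ, (∀ r, 1 ≤ y r) ∧ ∀ s, ∑ r, y r * w r s = 0 := by
  classical
  -- the "sphere" in the zero-sum hyperplane
  set Sp : Set (ι → ℝ) := {x | (∑ s, x s = 0) ∧ ∑ s, x s * x s = 1} with hSp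
  have hsum_cont : Continuous (fun x : ι → ℝ => ∑ s, x s) :=
    continuous_finset_sum _ fun s _ => continuous_apply s
  have hn_cont : Continuous (fun x : ι → ℝ => ∑ s, x s * x s) :=
    continuous_finset_sum _ fun s _ => (continuous_apply s).mul (continuous_apply s)
  have hSp_closed : IsClosed Sp := by
    have : Sp = (fun x : ι → ℝ => ∑ s, x s) ⁻¹' {0} ∩
        (fun x : ι → ℝ => ∑ s, x s * x s) ⁻¹' {1} := by
      ext x; simp [hSp]
    rw [this]
    exact (isClosed_singleton.preimage hsum_cont).inter (isClosed_singleton.preimage hn_cont)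
  have hSp_sub : Sp ⊆ Metric.closedBall 0 1 := by
    rintro x ⟨-, hx1⟩
    rw [Metric.mem_closedBall, dist_zero_right]
    rw [pi_norm_le_iff_of_nonneg (by norm_num : (0:ℝ) ≤ 1)]
    intro s
    rw [Real.norm_eq_abs, abs_le_one_iff_mul_self_le_one]
    calc x s * x s ≤ ∑ s', x s' * x s' :=
          Finset.single_le_sum (f := fun s' => x s' * x s')
            (fun s' _ => mul_self_nonneg _) (Finset.mem_univ s)
      _ = 1 := hx1
  have hSp_cpt : IsCompact Sp :=
    (isCompact_closedBall 0 1).of_isClosed_subset hSp_closed hSp_sub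
  -- uniform strict violation on the sphere
  have hδ : ∃ δ : ℝ, 0 < δ ∧ ∀ x ∈ Sp, ∃ r, ∑ s, w r s * x s ≤ -δ := by
    by_contra hcontra
    push_neg at hcontra
    have hseq : ∀ n : ℕ, ∃ x ∈ Sp, ∀ r, -(1/((n:ℝ)+1)) < ∑ s, w r s * x s := by
      intro n
      obtain ⟨x, hxSp, hx⟩ := hcontra (1/((n:ℝ)+1)) (by positivity)
      exact ⟨x, hxSp, fun r => by linarith [hx r]⟩
    choose xs hxsSp hxs using hseq
    obtain ⟨x, hxSp, φ, hφmono, hφlim⟩ := hSp_cpt.tendsto_subseq hxsSp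
    have hx0 : ∀ r, 0 ≤ ∑ s, w r s * x s := by
      intro r
      have hcont : Continuous (fun z : ι → ℝ => ∑ s, w r s * z s) :=
        continuous_finset_sum _ fun s _ => continuous_const.mul (continuous_apply s)
      have hlim : Filter.Tendsto (fun n => ∑ s, w r s * xs (φ n) s)
          Filter.atTop (nhds (∑ s, w r s * x s)) := (hcont.tendsto x).comp hφlim
      have hlow : Filter.Tendsto (fun n : ℕ => -(1/((n:ℝ)+1))) Filter.atTop (nhds 0) := by
        have := tendsto_one_div_add_atTop_nhds_zero_nat (𝕜 := ℝ)
        simpa using this.neg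
      refine le_of_tendsto_of_tendsto hlow hlim ?_
      filter_upwards with n
      have h1 := hxs (φ n) r
      have h2 : (1:ℝ)/((φ n:ℝ)+1) ≤ 1/((n:ℝ)+1) := by
        have h : n ≤ φ n := hφmono.le_apply
        have h' : ((n:ℝ)) ≤ (φ n : ℝ) := by exact_mod_cast h
        exact one_div_le_one_div_of_le (by positivity) (by linarith)
      linarith
    have := hcone x hxSp.1 hx0
    rw [this] at hxSp
    simp [hSp] at hxSp
  obtain ⟨δ, hδ0, hδprop⟩ := hδ
  -- the linear combination map
  set Ψ : (κ → ℝ) →ₗ[ℝ] (ι → ℝ) :=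
    { toFun := fun y s => ∑ r, y r * w r s
      map_add' := by
        intro a b; funext s
        simp only [Pi.add_apply, add_mul, Finset.sum_add_distrib]
      map_smul' := by
        intro t a; funext s
        simp only [Pi.smul_apply, smul_eq_mul, RingHom.id_apply, Finset.mul_sum]
        exact Finset.sum_congr rfl fun r _ => by ring } with hΨ
  have hΨapp : ∀ y s, Ψ y s = ∑ r, y r * w r s := fun _ _ => rfl
  have hΨH : ∀ y, ∑ s, Ψ y s = 0 := by
    intro y
    rw [show (∑ s, Ψ y s) = ∑ s, ∑ r, y r * w r s from rfl, Finset.sum_comm]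
    rw [Finset.sum_congr rfl fun r (_ : r ∈ Finset.univ) =>
      (Finset.mul_sum Finset.univ (fun s => w r s) (y r)).symm]
    rw [Finset.sum_congr rfl fun r (_ : r ∈ Finset.univ) => by rw [hwH r, mul_zero]]
    exact Finset.sum_const_zero
  by_cases hSpne : Sp.Nonempty
  · -- get the bound B on the sphere
    set W : ι → ℝ := fun s => ∑ r, w r s with hW
    have hWcont : Continuous (fun x : ι → ℝ => ∑ s, W s * x s) :=
      continuous_finset_sum _ fun s _ => continuous_const.mul (continuous_apply s)
    obtain ⟨xB, hxBSp, hxBmax⟩ := hSp_cpt.exists_isMaxOn hSpne hWcont.continuousOn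
    set B : ℝ := ∑ s, W s * xB s with hB
    have hBprop : ∀ x ∈ Sp, ∑ s, W s * x s ≤ B := fun x hx => hxBmax hx
    -- choose N large
    obtain ⟨n₀, hn₀⟩ := exists_nat_gt (B / δ)
    set N : ℝ := (n₀ : ℝ) + 1 with hN
    have hN1 : (1:ℝ) ≤ N := by
      rw [hN]; linarith [Nat.cast_nonneg (α := ℝ) n₀]
    have hNδ : B < (N - 1) * δ := by
      have : B / δ < (n₀ : ℝ) := hn₀
      have := (div_lt_iff₀ hδ0).1 this
      simp only [hN]
      linarith
    -- the compact convex box image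
    set box : Set (κ → ℝ) := Set.Icc (fun _ => 1) (fun _ => N) with hbox
    have hbox_cpt : IsCompact box := isCompact_Icc
    have hbox_cvx : Convex ℝ box := by
      rw [hbox, ← Set.pi_univ_Icc]
      exact convex_pi fun r _ => convex_Icc _ _
    set K : Set (ι → ℝ) := Ψ '' box with hK
    have hK_cpt : IsCompact K := hbox_cpt.image Ψ.continuous_of_finiteDimensional
    have hK_cvx : Convex ℝ K := hbox_cvx.linear_image Ψ
    have hK_ne : K.Nonempty := ⟨Ψ (fun _ => 1), ⟨fun _ => 1, by
      rw [hbox]; constructor <;> intro r <;> simp [hN1], rfl⟩⟩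
    obtain ⟨p, hpK, hpmin⟩ := hK_cpt.exists_isMinOn hK_ne hn_cont.continuousOn
    have hpK2 := hpK
    obtain ⟨yp, hypbox, hyp⟩ := hpK2
    -- variational inequality
    have hVI : ∀ v ∈ K, 0 ≤ ∑ s, p s * (v s - p s) := by
      intro v hvK
      set q : ℝ := ∑ s, p s * (v s - p s) with hq
      set m : ℝ := ∑ s, (v s - p s) * (v s - p s) with hm
      have hm0 : 0 ≤ m := Finset.sum_nonneg fun s _ => mul_self_nonneg _
      have hexp : ∀ t : ℝ, ∑ s, ((1-t) • p + t • v) s * ((1-t) • p + t • v) s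
          = (∑ s, p s * p s) + 2*t*q + t^2*m := by
        intro t
        simp only [Pi.add_apply, Pi.smul_apply, smul_eq_mul, hq, hm]
        rw [Finset.mul_sum, Finset.mul_sum, ← Finset.sum_add_distrib, ← Finset.sum_add_distrib]
        exact Finset.sum_congr rfl fun s _ => by ring
      by_contra hqneg
      push_neg at hqneg
      set t : ℝ := min 1 (-q/(m+1)) with ht
      have ht0 : 0 < t := by
        apply lt_min one_pos
        apply div_pos (by linarith) (by linarith)
      have ht1 : t ≤ 1 := min_le_left _ _
      have ht2 : t ≤ -q/(m+1) := min_le_right _ _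
      have h1 : t * (m+1) ≤ -q := (le_div_iff₀ (by positivity)).1 ht2
      have hmem : (1-t) • p + t • v ∈ K :=
        hK_cvx hpK hvK (by linarith) ht0.le (by ring)
      have := hpmin hmem
      rw [Set.mem_setOf_eq] at this
      have hge : (∑ s, p s * p s) ≤ (∑ s, p s * p s) + 2*t*q + t^2*m := by
        rw [← hexp t]; exact this
      nlinarith [mul_le_mul_of_nonneg_left h1 ht0.le, mul_pos ht0 ht0]
    -- show p = 0
    have hp0 : p = 0 := by
      by_contra hpne
      have hnp : 0 < ∑ s, p s * p s := by
        have hnonneg : 0 ≤ ∑ s, p s * p s :=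
          Finset.sum_nonneg fun s _ => mul_self_nonneg _
        rcases hnonneg.lt_or_eq with h' | h'
        · exact h'
        · exfalso
          apply hpne
          funext s
          have h0 := (Finset.sum_eq_zero_iff_of_nonneg (fun s (_ : s ∈ Finset.univ) =>
            mul_self_nonneg (p s))).1 h'.symm s (Finset.mem_univ s)
          have := mul_self_eq_zero.1 h0
          simp [this]
      set sq : ℝ := Real.sqrt (∑ s, p s * p s) with hsq
      have hsq0 : 0 < sq := Real.sqrt_pos.2 hnp
      have hsqsq : sq * sq = ∑ s, p s * p s := Real.mul_self_sqrt hnp.le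
      have hpH : ∑ s, p s = 0 := by rw [← hyp]; exact hΨH yp
      have hphat : (fun s => p s / sq) ∈ Sp := by
        constructor
        · rw [← Finset.sum_div, hpH, zero_div]
        · have : ∑ s, (p s / sq) * (p s / sq) = (∑ s, p s * p s) / (sq * sq) := by
            rw [Finset.sum_div]
            exact Finset.sum_congr rfl fun s _ => by ring
          rw [this, hsqsq, div_self (ne_of_gt hnp)]
      obtain ⟨r, hr⟩ := hδprop _ hphat
      have hrs : ∑ s, w r s * (p s / sq) = (∑ s, w r s * p s) / sq := by
        rw [Finset.sum_div]
        exact Finset.sum_congr rfl fun s _ => by ring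
      rw [hrs] at hr
      have hwr : ∑ s, w r s * p s ≤ -δ * sq := by
        rw [div_le_iff₀ hsq0] at hr
        linarith [hr]
      -- the B bound
      have hWp : ∑ s, W s * (p s / sq) ≤ B := hBprop _ hphat
      have hWp' : ∑ s, W s * p s ≤ B * sq := by
        have : ∑ s, W s * (p s / sq) = (∑ s, W s * p s) / sq := by
          rw [Finset.sum_div]
          exact Finset.sum_congr rfl fun s _ => by ring
        rw [this, div_le_iff₀ hsq0] at hWp
        linarith
      -- apply the VI at v := Ψ (1 + (N-1) e_r)
      set yv : κ → ℝ := fun r' => 1 + (if r' = r then N - 1 else 0) with hyv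
      have hyvbox : yv ∈ box := by
        rw [hbox]
        constructor <;> intro r' <;> simp only [hyv, Pi.one_apply]
        · split <;> simp <;> linarith
        · split <;> simp <;> linarith
      have hVIr := hVI (Ψ yv) ⟨yv, hyvbox, rfl⟩
      have hΨyv : ∀ s, Ψ yv s = W s + (N-1) * w r s := by
        intro s
        rw [hΨapp, hW]
        rw [show (∑ r', yv r' * w r' s) = ∑ r', (w r' s + (if r' = r then N - 1 else 0) * w r' s)
          from Finset.sum_congr rfl fun r' _ => by rw [hyv]; ring]
        rw [Finset.sum_add_distrib]
        congr 1
        rw [Finset.sum_eq_single r]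
        · simp
        · intro r' _ hne; simp [hne]
        · simp
      have hexpand : ∑ s, p s * (Ψ yv s - p s)
          = (∑ s, W s * p s) + (N-1) * (∑ s, w r s * p s) - (∑ s, p s * p s) := by
        rw [show (∑ s, p s * (Ψ yv s - p s))
            = ∑ s, (W s * p s + (N-1) * (w r s * p s) - p s * p s) from
          Finset.sum_congr rfl fun s _ => by rw [hΨyv s]; ring]
        rw [Finset.sum_sub_distrib, Finset.sum_add_distrib]
        congr 2
        rw [Finset.mul_sum]
      rw [hexpand] at hVIr
      -- contradiction
      have hchain : (0:ℝ) < ∑ s, p s * p s := hnp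
      have hc2 : ∑ s, p s * p s ≤ B * sq + (N-1) * (-δ * sq) := by
        have hmul : (N-1) * (∑ s, w r s * p s) ≤ (N-1) * (-δ * sq) :=
          mul_le_mul_of_nonneg_left hwr (by linarith)
        linarith
      have : sq * sq ≤ B * sq - (N-1) * δ * sq := by rw [hsqsq]; linarith
      have hsqle : sq ≤ B - (N-1)*δ := by
        have := (mul_le_mul_iff_of_pos_right hsq0).1 (by linarith : sq * sq ≤ (B - (N-1)*δ) * sq)
        linarith
      linarith
    refine ⟨yp, ?_, ?_⟩
    · intro r
      have := hypbox.1
      exact this r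
    · intro s
      have := congrFun hyp s
      rw [hΨapp] at this
      rw [this, hp0]
      simp
  · -- the sphere is empty: all the w's vanish
    refine ⟨fun _ => 1, fun r => le_refl 1, fun s => ?_⟩
    have hwzero : ∀ r, (fun s => w r s) = 0 := by
      intro r
      by_contra hne
      have hnp : 0 < ∑ s, w r s * w r s := by
        have hnonneg : 0 ≤ ∑ s, w r s * w r s :=
          Finset.sum_nonneg fun s _ => mul_self_nonneg _
        rcases hnonneg.lt_or_eq with h' | h'
        · exact h'
        · exfalso
          apply hne
          funext s
          have := (Finset.sum_eq_zero_iff_of_nonneg (fun s (_ : s ∈ Finset.univ) =>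
            mul_self_nonneg (w r s))).1 h'.symm s (Finset.mem_univ s)
          have := mul_self_eq_zero.1 this
          simp [this]
      set sq : ℝ := Real.sqrt (∑ s, w r s * w r s) with hsq
      have hsq0 : 0 < sq := Real.sqrt_pos.2 hnp
      have hsqsq : sq * sq = ∑ s, w r s * w r s := Real.mul_self_sqrt hnp.le
      apply hSpne
      refine ⟨fun s => w r s / sq, ?_, ?_⟩
      · rw [← Finset.sum_div, hwH r, zero_div]
      · have : ∑ s, (w r s / sq) * (w r s / sq) = (∑ s, w r s * w r s) / (sq * sq) := by
          rw [Finset.sum_div]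
          exact Finset.sum_congr rfl fun s _ => by ring
        rw [this, hsqsq, div_self (ne_of_gt hnp)]
    rw [Finset.sum_congr rfl fun r (_ : r ∈ Finset.univ) => by
      rw [one_mul, show w r s = 0 from congrFun (hwzero r) s]]
    exact Finset.sum_const_zero




open Matrix

variable {k₁ k₂ : ℕ}

/-- pointedness of the feasible cone at a fully supported unique CE -/
lemma cone_of_unique (hk₁ : 0 < k₁) (hk₂ : 0 < k₂) (G : BiGame k₁ k₂)
    (μ : SP k₁ k₂ → ℝ) (hμ : IsCE G μ) (huniq : ∀ ν, IsCE G ν → ν = μ)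
    (hfull : ∀ s, 0 < μ s) :
    ∀ x : SP k₁ k₂ → ℝ, (∑ s, x s = 0) → (∀ r, Aval G r μ = 0 → 0 ≤ Aval G r x) → x = 0 := by
  classical
  obtain ⟨hμ0, hμ1, hμrows⟩ := (isCE_iff G μ).1 hμ
  intro x hxsum hxr
  by_contra hxne
  have hSPne : Nonempty (SP k₁ k₂) := ⟨(⟨0, hk₁⟩, ⟨0, hk₂⟩)⟩
  have hRIne : Nonempty (RI k₁ k₂) := ⟨Sum.inl (⟨0, hk₁⟩, ⟨0, hk₁⟩)⟩
  set t1 : ℝ := Finset.univ.inf' (Finset.univ_nonempty) (fun s : SP k₁ k₂ => μ s / (1 + |x s|))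
    with ht1def
  set t2 : ℝ := Finset.univ.inf' (Finset.univ_nonempty) (fun r : RI k₁ k₂ =>
    if Aval G r μ = 0 then 1 else Aval G r μ / (1 + |Aval G r x|)) with ht2def
  set t : ℝ := min t1 t2 with htdef
  have ht1pos : 0 < t1 := by
    rw [ht1def, Finset.lt_inf'_iff]
    intro s _
    exact div_pos (hfull s) (by positivity)
  have ht2pos : 0 < t2 := by
    rw [ht2def, Finset.lt_inf'_iff]
    intro r _
    split
    · exact one_pos
    · rename_i h
      exact div_pos (lt_of_le_of_ne (hμrows r) (Ne.symm h)) (by positivity)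
  have ht0 : 0 < t := lt_min ht1pos ht2pos
  have hCE : IsCE G (μ + t • x) := by
    rw [isCE_iff]
    refine ⟨?_, ?_, ?_⟩
    · intro s
      have hle : t ≤ μ s / (1 + |x s|) :=
        le_trans (min_le_left _ _) (Finset.inf'_le _ (Finset.mem_univ s))
      have hle' : t * (1 + |x s|) ≤ μ s := by
        rw [← le_div_iff₀ (by positivity)]
        exact hle
      have hxs : -(t * |x s|) ≤ t * x s := by
        have := mul_le_mul_of_nonneg_left (neg_abs_le (x s)) ht0.le
        linarith [this]
      simp only [Pi.add_apply, Pi.smul_apply, smul_eq_mul]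
      linarith
    · simp only [Pi.add_apply, Pi.smul_apply, smul_eq_mul]
      rw [Finset.sum_add_distrib, hμ1, ← Finset.mul_sum, hxsum]
      ring
    · intro r
      rw [Aval_add_smul]
      by_cases h : Aval G r μ = 0
      · rw [h, zero_add]
        exact mul_nonneg ht0.le (hxr r h)
      · have hle : t ≤ Aval G r μ / (1 + |Aval G r x|) := by
          refine le_trans (min_le_right _ _) ?_
          have := Finset.inf'_le (fun r : RI k₁ k₂ =>
            if Aval G r μ = 0 then 1 else Aval G r μ / (1 + |Aval G r x|))
            (Finset.mem_univ r)
          rwa [if_neg h] at this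
        have hle' : t * (1 + |Aval G r x|) ≤ Aval G r μ := by
          rw [← le_div_iff₀ (by positivity)]
          exact hle
        have hxs : -(t * |Aval G r x|) ≤ t * Aval G r x := by
          have := mul_le_mul_of_nonneg_left (neg_abs_le (Aval G r x)) ht0.le
          linarith [this]
        linarith
  have heq := huniq _ hCE
  apply hxne
  funext s
  have := congrFun heq s
  simp only [Pi.add_apply, Pi.smul_apply, smul_eq_mul] at this
  have : t * x s = 0 := by linarith
  have := mul_eq_zero.1 this
  rcases this with h | h
  · exact absurd h (ne_of_gt ht0)
  · simpa using h

open Classical in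
/-- constraint vector masked to the constraints tight at `μ` -/
noncomputable def tv (G : BiGame k₁ k₂) (μ : SP k₁ k₂ → ℝ) (G' : BiGame k₁ k₂)
    (r : RI k₁ k₂) (s : SP k₁ k₂) : ℝ :=
  if Aval G r μ = 0 then avec G' r s else 0

noncomputable def Lm (G : BiGame k₁ k₂) (μ : SP k₁ k₂ → ℝ) (G' : BiGame k₁ k₂) :
    Matrix (Unit ⊕ RI k₁ k₂) (SP k₁ k₂) ℝ :=
  Matrix.of fun i s => Sum.elim (fun _ => (1:ℝ)) (fun r => tv G μ G' r s) i

noncomputable def Mm (G : BiGame k₁ k₂) (μ : SP k₁ k₂ → ℝ) (G' : BiGame k₁ k₂) :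
    Matrix (SP k₁ k₂) (SP k₁ k₂) ℝ :=
  (Lm G μ G')ᵀ * Lm G μ G'

def bv (k₁ k₂ : ℕ) : Unit ⊕ RI k₁ k₂ → ℝ := Sum.elim (fun _ => (1:ℝ)) (fun _ => 0)

noncomputable def Dq (G : BiGame k₁ k₂) (μ : SP k₁ k₂ → ℝ) (G' : BiGame k₁ k₂) : ℝ :=
  (Mm G μ G').det

noncomputable def wq (G : BiGame k₁ k₂) (μ : SP k₁ k₂ → ℝ) (G' : BiGame k₁ k₂) :
    SP k₁ k₂ → ℝ :=
  (Mm G μ G').adjugate *ᵥ ((Lm G μ G')ᵀ *ᵥ bv k₁ k₂)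

noncomputable def gq (G : BiGame k₁ k₂) (μ : SP k₁ k₂ → ℝ) (zh : Unit ⊕ RI k₁ k₂ → ℝ)
    (G' : BiGame k₁ k₂) : Unit ⊕ RI k₁ k₂ → ℝ :=
  fun i => (Dq G μ G')^2 * zh i
    - Dq G μ G' * (Lm G μ G' *ᵥ ((Mm G μ G').adjugate *ᵥ ((Lm G μ G')ᵀ *ᵥ zh))) i

-- continuity lemmas
lemma cont_pay1 (a : Fin k₁) (b : Fin k₂) : Continuous fun G' : BiGame k₁ k₂ => G'.1 a b :=
  (continuous_apply b).comp ((continuous_apply a).comp continuous_fst)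

lemma cont_pay2 (a : Fin k₁) (b : Fin k₂) : Continuous fun G' : BiGame k₁ k₂ => G'.2 a b :=
  (continuous_apply b).comp ((continuous_apply a).comp continuous_snd)

lemma cont_avec (r : RI k₁ k₂) (s : SP k₁ k₂) :
    Continuous fun G' : BiGame k₁ k₂ => avec G' r s := by
  rcases r with ⟨a, a'⟩ | ⟨b, b'⟩
  · by_cases h : s.1 = a
    · simp only [avec, h, if_true]
      exact (cont_pay1 a s.2).sub (cont_pay1 a' s.2)
    · simp only [avec, h, if_false]
      exact continuous_const
  · by_cases h : s.2 = b
    · simp only [avec, h, if_true]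
      exact (cont_pay2 s.1 b).sub (cont_pay2 s.1 b')
    · simp only [avec, h, if_false]
      exact continuous_const

lemma cont_tv (G : BiGame k₁ k₂) (μ : SP k₁ k₂ → ℝ) (r : RI k₁ k₂) (s : SP k₁ k₂) :
    Continuous fun G' : BiGame k₁ k₂ => tv G μ G' r s := by
  by_cases h : Aval G r μ = 0
  · simp only [tv, h, if_true]
    exact cont_avec r s
  · simp only [tv, h, if_false]
    exact continuous_const

lemma cont_Lm (G : BiGame k₁ k₂) (μ : SP k₁ k₂ → ℝ) :
    Continuous fun G' : BiGame k₁ k₂ => Lm G μ G' := by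
  apply continuous_matrix
  rintro (⟨⟩ | r) s
  · exact continuous_const
  · exact cont_tv G μ r s

lemma cont_Mm (G : BiGame k₁ k₂) (μ : SP k₁ k₂ → ℝ) :
    Continuous fun G' : BiGame k₁ k₂ => Mm G μ G' := by
  simp only [Mm]
  exact ((cont_Lm G μ).matrix_transpose).matrix_mul (cont_Lm G μ)

lemma cont_Dq (G : BiGame k₁ k₂) (μ : SP k₁ k₂ → ℝ) :
    Continuous fun G' : BiGame k₁ k₂ => Dq G μ G' :=
  (cont_Mm G μ).matrix_det

lemma cont_wq (G : BiGame k₁ k₂) (μ : SP k₁ k₂ → ℝ) (s : SP k₁ k₂) :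
    Continuous fun G' : BiGame k₁ k₂ => wq G μ G' s := by
  have h : Continuous fun G' : BiGame k₁ k₂ => wq G μ G' := by
    simp only [wq]
    exact ((cont_Mm G μ).matrix_adjugate).matrix_mulVec
      (((cont_Lm G μ).matrix_transpose).matrix_mulVec continuous_const)
  exact (continuous_apply s).comp h

lemma cont_gq (G : BiGame k₁ k₂) (μ : SP k₁ k₂ → ℝ) (zh : Unit ⊕ RI k₁ k₂ → ℝ)
    (i : Unit ⊕ RI k₁ k₂) :
    Continuous fun G' : BiGame k₁ k₂ => gq G μ zh G' i := by
  have hvec : Continuous fun G' : BiGame k₁ k₂ =>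
      Lm G μ G' *ᵥ ((Mm G μ G').adjugate *ᵥ ((Lm G μ G')ᵀ *ᵥ zh)) :=
    (cont_Lm G μ).matrix_mulVec (((cont_Mm G μ).matrix_adjugate).matrix_mulVec
      (((cont_Lm G μ).matrix_transpose).matrix_mulVec continuous_const))
  have h : Continuous fun G' : BiGame k₁ k₂ =>
      (Lm G μ G' *ᵥ ((Mm G μ G').adjugate *ᵥ ((Lm G μ G')ᵀ *ᵥ zh))) i :=
    (continuous_apply i).comp hvec
  exact (((cont_Dq G μ).pow 2).mul continuous_const).sub ((cont_Dq G μ).mul h)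




open Matrix

variable {k₁ k₂ : ℕ}

open Classical in
lemma sum_tv (G : BiGame k₁ k₂) (μ : SP k₁ k₂ → ℝ) (G' : BiGame k₁ k₂) (r : RI k₁ k₂)
    (ν : SP k₁ k₂ → ℝ) :
    ∑ s, ν s * tv G μ G' r s = if Aval G r μ = 0 then Aval G' r ν else 0 := by
  by_cases h : Aval G r μ = 0
  · simp only [tv, h, if_true]
    rfl
  · simp [tv, h]

end CEAux

open CEAux Matrix in
theorem CEAux.mainAux (k₁ k₂ : ℕ) (hk₁ : 0 < k₁) (hk₂ : 0 < k₂) (G : BiGame k₁ k₂)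
    (μ : Fin k₁ × Fin k₂ → ℝ) (hμ : IsCE G μ) (huniq : ∀ ν, IsCE G ν → ν = μ)
    (hfull : ∀ s, 0 < μ s) :
    ∃ U ∈ nhds G, ∀ G' ∈ U, ∃ ν : Fin k₁ × Fin k₂ → ℝ, IsCE G' ν ∧
      (∀ ν', IsCE G' ν' → ν' = ν) ∧ ∀ s, 0 < ν s := by
  classical
  have hSPne : Nonempty (SP k₁ k₂) := ⟨(⟨0, hk₁⟩, ⟨0, hk₂⟩)⟩
  have hRIne : Nonempty (RI k₁ k₂) := ⟨Sum.inl (⟨0, hk₁⟩, ⟨0, hk₁⟩)⟩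
  obtain ⟨hμ0, hμ1, hμrows⟩ := (isCE_iff G μ).1 hμ
  have cone := cone_of_unique hk₁ hk₂ G μ hμ huniq hfull
  set cardR : ℝ := (Fintype.card (SP k₁ k₂) : ℝ) with hcardR
  have hcard0 : 0 < cardR := by
    rw [hcardR]; exact_mod_cast Fintype.card_pos
  set w : RI k₁ k₂ → SP k₁ k₂ → ℝ :=
    fun r s => tv G μ G r s - (∑ t, tv G μ G r t) / cardR with hw
  have hwH : ∀ r, ∑ s, w r s = 0 := by
    intro r
    simp only [hw]
    rw [Finset.sum_sub_distrib, Finset.sum_const, Finset.card_univ, nsmul_eq_mul]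
    rw [← hcardR]
    field_simp
    ring
  have hwipx : ∀ (r : RI k₁ k₂) (x : SP k₁ k₂ → ℝ), (∑ s, x s = 0) →
      ∑ s, w r s * x s = ∑ s, x s * tv G μ G r s := by
    intro r x hx
    simp only [hw]
    rw [show (∑ s, (tv G μ G r s - (∑ t, tv G μ G r t) / cardR) * x s)
        = ∑ s, (tv G μ G r s * x s - ((∑ t, tv G μ G r t) / cardR) * x s) from
      Finset.sum_congr rfl fun s _ => by ring]
    rw [Finset.sum_sub_distrib, ← Finset.mul_sum, hx, mul_zero, sub_zero]
    exact Finset.sum_congr rfl fun s _ => mul_comm _ _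
  have hconew : ∀ x : SP k₁ k₂ → ℝ, (∑ s, x s = 0) →
      (∀ r, 0 ≤ ∑ s, w r s * x s) → x = 0 := by
    intro x hx h
    refine cone x hx ?_
    intro r hT
    have h2 := h r
    rw [hwipx r x hx, sum_tv, if_pos hT] at h2
    exact h2
  obtain ⟨yh, hyh1, hyh0⟩ := exists_pos_combination w hwH hconew
  set c₀ : ℝ := ∑ r, yh r * ((∑ t, tv G μ G r t) / cardR) with hc₀
  have htvsum : ∀ s, ∑ r, yh r * tv G μ G r s = c₀ := by
    intro s
    have h := hyh0 s
    simp only [hw] at h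
    rw [show (∑ r, yh r * (tv G μ G r s - (∑ t, tv G μ G r t) / cardR))
        = ∑ r, (yh r * tv G μ G r s - yh r * ((∑ t, tv G μ G r t) / cardR)) from
      Finset.sum_congr rfl fun r _ => by ring, Finset.sum_sub_distrib] at h
    rw [hc₀]
    linarith
  set zh : Unit ⊕ RI k₁ k₂ → ℝ := Sum.elim (fun _ => -c₀) yh with hzh
  have hLz : (Lm G μ G)ᵀ *ᵥ zh = 0 := by
    funext s
    simp only [Matrix.mulVec, dotProduct, Matrix.transpose_apply, Pi.zero_apply]
    rw [Fintype.sum_sum_type]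
    simp only [Lm, Matrix.of_apply, Sum.elim_inl, Sum.elim_inr, hzh]
    rw [show (∑ r, tv G μ G r s * yh r) = ∑ r, yh r * tv G μ G r s from
      Finset.sum_congr rfl fun r _ => mul_comm _ _, htvsum s]
    simp
  have hLμ : Lm G μ G *ᵥ μ = bv k₁ k₂ := by
    funext i
    rcases i with ⟨⟩ | r
    · simp only [Matrix.mulVec, dotProduct, Lm, Matrix.of_apply, Sum.elim_inl,
        one_mul, bv]
      exact hμ1
    · simp only [Matrix.mulVec, dotProduct, Lm, Matrix.of_apply, Sum.elim_inr, bv]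
      rw [show (∑ s, tv G μ G r s * μ s) = ∑ s, μ s * tv G μ G r s from
        Finset.sum_congr rfl fun s _ => mul_comm _ _, sum_tv]
      split
      · rename_i h; exact h
      · rfl
  have hdetG : Dq G μ G ≠ 0 := by
    intro h0
    obtain ⟨v, hvne, hv⟩ := Matrix.exists_mulVec_eq_zero_iff.2 h0
    have h2 : v ⬝ᵥ (Mm G μ G *ᵥ v) = 0 := by rw [hv, dotProduct_zero]
    rw [Mm, ← Matrix.mulVec_mulVec, dotProduct_mulVec, Matrix.vecMul_transpose] at h2
    have hLv : Lm G μ G *ᵥ v = 0 := dotProduct_self_eq_zero.1 h2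
    have hsv : ∑ s, v s = 0 := by
      have := congrFun hLv (Sum.inl ())
      simp only [Matrix.mulVec, dotProduct, Lm, Matrix.of_apply, Sum.elim_inl,
        one_mul, Pi.zero_apply] at this
      exact this
    have hrows : ∀ r, Aval G r μ = 0 → 0 ≤ Aval G r v := by
      intro r hT
      have := congrFun hLv (Sum.inr r)
      simp only [Matrix.mulVec, dotProduct, Lm, Matrix.of_apply, Sum.elim_inr,
        Pi.zero_apply] at this
      rw [show (∑ s, tv G μ G r s * v s) = ∑ s, v s * tv G μ G r s from
        Finset.sum_congr rfl fun s _ => mul_comm _ _, sum_tv, if_pos hT] at this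
      rw [this]
    exact hvne (cone v hsv hrows)
  -- the neighbourhood
  set U : Set (BiGame k₁ k₂) :=
    {G' | (∀ s, 0 < Dq G μ G' * wq G μ G' s) ∧
      (∀ r : RI k₁ k₂, 0 < gq G μ zh G' (Sum.inr r))} with hU
  have hUopen : IsOpen U := by
    have hrw : U = (⋂ s, (fun G' => Dq G μ G' * wq G μ G' s) ⁻¹' Set.Ioi 0) ∩
        (⋂ r : RI k₁ k₂, (fun G' => gq G μ zh G' (Sum.inr r)) ⁻¹' Set.Ioi 0) := by
      ext G'
      simp [hU, Set.mem_iInter, Set.mem_preimage, Set.mem_Ioi]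
    rw [hrw]
    refine IsOpen.inter ?_ ?_
    · exact isOpen_iInter_of_finite fun s =>
        isOpen_Ioi.preimage ((cont_Dq G μ).mul (cont_wq G μ s))
    · exact isOpen_iInter_of_finite fun r =>
        isOpen_Ioi.preimage (cont_gq G μ zh (Sum.inr r))
  have hDD : 0 < Dq G μ G * Dq G μ G := mul_self_pos.2 hdetG
  have hGU : G ∈ U := by
    constructor
    · intro s
      have hwqG : wq G μ G = Dq G μ G • μ := by
        have hMmdef : (Lm G μ G)ᵀ * Lm G μ G = Mm G μ G := rfl
        rw [wq, ← hLμ, Matrix.mulVec_mulVec μ ((Lm G μ G)ᵀ) (Lm G μ G), hMmdef,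
          Matrix.mulVec_mulVec μ ((Mm G μ G).adjugate) (Mm G μ G),
          Matrix.adjugate_mul, Matrix.smul_mulVec, Matrix.one_mulVec]
        rfl
      rw [hwqG]
      simp only [Pi.smul_apply, smul_eq_mul]
      rw [show Dq G μ G * (Dq G μ G * μ s) = (Dq G μ G * Dq G μ G) * μ s by ring]
      exact mul_pos hDD (hfull s)
    · intro r
      rw [gq, hLz, Matrix.mulVec_zero, Matrix.mulVec_zero]
      simp only [Pi.zero_apply, mul_zero, sub_zero, hzh, Sum.elim_inr]
      have := hyh1 r
      nlinarith [hDD]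
  refine ⟨U, hUopen.mem_nhds hGU, ?_⟩
  intro G' hG'U
  obtain ⟨hq, hg⟩ := hG'U
  have hD' : Dq G μ G' ≠ 0 := by
    intro h0
    have := hq (Classical.arbitrary _)
    rw [h0, zero_mul] at this
    exact lt_irrefl _ this
  have hDD' : 0 < Dq G μ G' * Dq G μ G' := mul_self_pos.2 hD'
  have hunit : IsUnit (Mm G μ G').det := isUnit_iff_ne_zero.2 hD'
  set zv : Unit ⊕ RI k₁ k₂ → ℝ :=
    zh - Lm G μ G' *ᵥ ((Mm G μ G')⁻¹ *ᵥ ((Lm G μ G')ᵀ *ᵥ zh)) with hzv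
  have hzvorth : (Lm G μ G')ᵀ *ᵥ zv = 0 := by
    rw [hzv, Matrix.mulVec_sub, Matrix.mulVec_mulVec, ← Mm, Matrix.mulVec_mulVec,
      Matrix.mul_nonsing_inv _ hunit, Matrix.one_mulVec, sub_self]
  have hMinv : (Mm G μ G')⁻¹ *ᵥ ((Lm G μ G')ᵀ *ᵥ zh)
      = (Dq G μ G')⁻¹ • ((Mm G μ G').adjugate *ᵥ ((Lm G μ G')ᵀ *ᵥ zh)) := by
    rw [Matrix.inv_def, Ring.inverse_eq_inv', Matrix.smul_mulVec, Dq]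
  have heq : ∀ i, gq G μ zh G' i = (Dq G μ G' * Dq G μ G') * zv i := by
    intro i
    rw [hzv]
    simp only [Pi.sub_apply]
    rw [hMinv, Matrix.mulVec_smul]
    simp only [Pi.smul_apply, smul_eq_mul, gq]
    field_simp
  have hzvr : ∀ r, 0 < zv (Sum.inr r) := by
    intro r
    have hgr := hg r
    rw [heq (Sum.inr r)] at hgr
    by_contra hle
    push_neg at hle
    nlinarith
  have hdot : ∀ ν : SP k₁ k₂ → ℝ, zv (Sum.inl ()) * (∑ s, ν s)
      + ∑ r, zv (Sum.inr r) * (∑ s, ν s * tv G μ G' r s) = 0 := by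
    intro ν
    have h1 : zv ⬝ᵥ (Lm G μ G' *ᵥ ν) = 0 := by
      rw [dotProduct_mulVec, ← Matrix.transpose_transpose (Lm G μ G'),
        Matrix.vecMul_transpose, hzvorth, zero_dotProduct]
    have hunit1 : (Lm G μ G' *ᵥ ν) (Sum.inl ()) = ∑ s, ν s := by
      simp [Lm, Matrix.mulVec, dotProduct]
    have hinr1 : ∀ r, (Lm G μ G' *ᵥ ν) (Sum.inr r) = ∑ s, ν s * tv G μ G' r s := by
      intro r
      simp only [Lm, Matrix.mulVec, dotProduct, Matrix.of_apply, Sum.elim_inr]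
      exact Finset.sum_congr rfl fun s _ => mul_comm _ _
    have hexpand : zv ⬝ᵥ (Lm G μ G' *ᵥ ν) = zv (Sum.inl ()) * (∑ s, ν s)
        + ∑ r, zv (Sum.inr r) * (∑ s, ν s * tv G μ G' r s) := by
      rw [dotProduct, Fintype.sum_sum_type]
      congr 1
      · rw [show (∑ i : Unit, zv (Sum.inl i) * (Lm G μ G' *ᵥ ν) (Sum.inl i))
            = zv (Sum.inl ()) * (Lm G μ G' *ᵥ ν) (Sum.inl ()) from by simp]
        rw [hunit1]
      · exact Finset.sum_congr rfl fun r _ => by rw [hinr1 r]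
    rw [hexpand] at h1
    exact h1
  set ym : RI k₁ k₂ → ℝ := fun r => if Aval G r μ = 0 then zv (Sum.inr r) else 0 with hym
  have hym0 : ∀ r, 0 ≤ ym r := by
    intro r
    by_cases h : Aval G r μ = 0
    · simp only [hym, h, if_true]
      exact (hzvr r).le
    · simp [hym, h]
  obtain ⟨ν₀, hν₀0, hν₀1, hν₀val⟩ := key_pair hk₁ hk₂ G' ym hym0
  have hsum_mask : ∀ ν : SP k₁ k₂ → ℝ,
      ∑ r, zv (Sum.inr r) * (∑ s, ν s * tv G μ G' r s) = ∑ r, ym r * Aval G' r ν := by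
    intro ν
    refine Finset.sum_congr rfl fun r _ => ?_
    rw [sum_tv]
    by_cases h : Aval G r μ = 0
    · simp [hym, h]
    · simp [hym, h]
  have hzl : zv (Sum.inl ()) = 0 := by
    have h := hdot ν₀
    rw [hν₀1, hsum_mask ν₀, hν₀val, mul_one, add_zero] at h
    exact h
  set νh : SP k₁ k₂ → ℝ := (Mm G μ G')⁻¹ *ᵥ ((Lm G μ G')ᵀ *ᵥ bv k₁ k₂) with hνh
  have hCEeq : ∀ ν, IsCE G' ν → ν = νh := by
    intro ν hν
    obtain ⟨hν0, hν1, hνrows⟩ := (isCE_iff G' ν).1 hν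
    have hsumzero : ∑ r, zv (Sum.inr r) * (∑ s, ν s * tv G μ G' r s) = 0 := by
      have h := hdot ν
      rw [hν1, hzl, zero_mul, zero_add] at h
      exact h
    have hterms : ∀ r ∈ Finset.univ, 0 ≤ zv (Sum.inr r) * (∑ s, ν s * tv G μ G' r s) := by
      intro r _
      refine mul_nonneg (hzvr r).le ?_
      rw [sum_tv]
      split
      · exact hνrows r
      · exact le_refl 0
    have hzero := (Finset.sum_eq_zero_iff_of_nonneg hterms).1 hsumzero
    have htight : ∀ r, (∑ s, ν s * tv G μ G' r s) = 0 := by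
      intro r
      have h := hzero r (Finset.mem_univ r)
      rcases mul_eq_zero.1 h with h' | h'
      · exact absurd h' (ne_of_gt (hzvr r))
      · exact h'
    have hLν : Lm G μ G' *ᵥ ν = bv k₁ k₂ := by
      funext i
      rcases i with ⟨⟩ | r
      · simp only [Matrix.mulVec, dotProduct, Lm, Matrix.of_apply, Sum.elim_inl,
          one_mul, bv]
        exact hν1
      · simp only [Matrix.mulVec, dotProduct, Lm, Matrix.of_apply, Sum.elim_inr, bv]
        rw [show (∑ s, tv G μ G' r s * ν s) = ∑ s, ν s * tv G μ G' r s from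
          Finset.sum_congr rfl fun s _ => mul_comm _ _, htight r]
    have hMν : Mm G μ G' *ᵥ ν = (Lm G μ G')ᵀ *ᵥ bv k₁ k₂ := by
      rw [Mm, ← Matrix.mulVec_mulVec, hLν]
    calc ν = (1 : Matrix (SP k₁ k₂) (SP k₁ k₂) ℝ) *ᵥ ν := by rw [Matrix.one_mulVec]
      _ = ((Mm G μ G')⁻¹ * Mm G μ G') *ᵥ ν := by rw [Matrix.nonsing_inv_mul _ hunit]
      _ = (Mm G μ G')⁻¹ *ᵥ (Mm G μ G' *ᵥ ν) := by rw [← Matrix.mulVec_mulVec]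
      _ = νh := by rw [hMν, hνh]
  have hνhpos : ∀ s, 0 < νh s := by
    intro s
    have hq' := hq s
    have hformula : νh s = (Dq G μ G' * wq G μ G' s) / (Dq G μ G' * Dq G μ G') := by
      have hwq' : (Mm G μ G').adjugate *ᵥ ((Lm G μ G')ᵀ *ᵥ bv k₁ k₂) = wq G μ G' := rfl
      have hDq' : (Mm G μ G').det = Dq G μ G' := rfl
      rw [hνh, Matrix.inv_def, Ring.inverse_eq_inv', Matrix.smul_mulVec, hwq']
      simp only [Pi.smul_apply, smul_eq_mul, hDq']
      field_simp
    rw [hformula]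
    exact div_pos hq' hDD'
  obtain ⟨ν₁, hν₁⟩ := exists_CE hk₁ hk₂ G'
  refine ⟨ν₁, hν₁, ?_, ?_⟩
  · intro ν' hν'
    rw [hCEeq ν' hν', ← hCEeq ν₁ hν₁]
  · intro s
    rw [hCEeq ν₁ hν₁]
    exact hνhpos s

/-- if a two-player finite game has a unique correlated equilibrium `μ` and `μ`
has full support, then every game in some neighborhood has a unique correlated equilibrium,
which moreover has full support. -/
theorem statement16 (k₁ k₂ : ℕ) (hk₁ : 0 < k₁) (hk₂ : 0 < k₂) (G : BiGame k₁ k₂)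
    (μ : Fin k₁ × Fin k₂ → ℝ) (hμ : IsCE G μ) (huniq : ∀ ν, IsCE G ν → ν = μ)
    (hfull : ∀ s, 0 < μ s) :
    ∃ U ∈ nhds G, ∀ G' ∈ U, ∃ ν : Fin k₁ × Fin k₂ → ℝ, IsCE G' ν ∧
      (∀ ν', IsCE G' ν' → ν' = ν) ∧ ∀ s, 0 < ν s := by
  exact CEAux.mainAux k₁ k₂ hk₁ hk₂ G μ hμ huniq hfull
end
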